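/- arXiv:0907.0526 — 4 statements merged into one kernel-verified Lean document; each statement's English description precedes it below -/
import Mathlib

section
/- Let I be an ideal of K[x₁,…,xₙ] and G ⊆ I. Then G is a Gröbner basis for I with respect to a graded monomial ordering ≺ if and only if G* = { g* : g ∈ G } is a Gröbner basis for the homogenization ideal ⟨I*⟩ in K[x₁,…,xₙ,t] with respect to the extended ordering ≺_t. -/
open MvPolynomial

noncomputable def deh {K : Type*} [CommSemiring K] {n : ℕ}
    (F : MvPolynomial (Option (Fin n)) K) : MvPolynomial (Fin n) K :=
  aeval (fun o => o.elim 1 X) F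

noncomputable def hmz {K : Type*} [CommSemiring K] {n : ℕ}
    (f : MvPolynomial (Fin n) K) : MvPolynomial (Option (Fin n)) K :=
  f.support.sum fun d =>
    monomial (Finsupp.mapDomain some d +
      Finsupp.single (none : Option (Fin n)) (f.totalDegree - d.sum fun _ e => e)) (coeff d f)

def mdeg {σ : Type*} (d : σ →₀ ℕ) : ℕ := d.sum fun _ e => e

def IsLM {K σ : Type*} [CommSemiring K] (lt : (σ →₀ ℕ) → (σ →₀ ℕ) → Prop)
    (f : MvPolynomial σ K) (m : σ →₀ ℕ) : Prop :=
  m ∈ f.support ∧ ∀ m' ∈ f.support, m' ≠ m → lt m' m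

def GoodOrder {σ : Type*} (lt : (σ →₀ ℕ) → (σ →₀ ℕ) → Prop) : Prop :=
  (∀ a b, a ≠ b → lt a b ∨ lt b a) ∧ (∀ a b, lt a b → ¬ lt b a) ∧
    (∀ a b c, lt a b → lt b c → lt a c) ∧
    (∀ a b, mdeg a < mdeg b → lt a b) ∧
    (∀ a b c, lt a b → lt (a + c) (b + c))

noncomputable def xpart {n : ℕ} (M : Option (Fin n) →₀ ℕ) : Fin n →₀ ℕ :=
  Finsupp.equivFunOnFinite.symm fun i => M (some i)

def ltT {n : ℕ} (lt : (Fin n →₀ ℕ) → (Fin n →₀ ℕ) → Prop)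
    (M₁ M₂ : Option (Fin n) →₀ ℕ) : Prop :=
  lt (xpart M₁) (xpart M₂) ∨ (xpart M₁ = xpart M₂ ∧ M₁ none < M₂ none)

def monDvd {σ : Type*} (a b : σ →₀ ℕ) : Prop := ∃ c, b = a + c

def IsGB {K σ : Type*} [CommSemiring K] (lt : (σ →₀ ℕ) → (σ →₀ ℕ) → Prop)
    (G Jset : Set (MvPolynomial σ K)) : Prop :=
  G ⊆ Jset ∧ ∀ f ∈ Jset, f ≠ 0 →
    ∃ g ∈ G, ∃ mf mg, IsLM lt f mf ∧ IsLM lt g mg ∧ monDvd mg mf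

noncomputable def HSet {K : Type*} [CommSemiring K] {n : ℕ}
    (I : Ideal (MvPolynomial (Fin n) K)) : Set (MvPolynomial (Option (Fin n)) K) :=
  {F | ∃ f ∈ I, f ≠ 0 ∧ F = hmz f}

def GradedIdeal {K : Type*} [CommSemiring K] {n : ℕ}
    (J : Ideal (MvPolynomial (Option (Fin n)) K)) : Prop :=
  ∀ F ∈ J, ∀ p : ℕ, homogeneousComponent p F ∈ J

noncomputable def dehHom {K : Type*} [CommSemiring K] {n : ℕ} :
    MvPolynomial (Option (Fin n)) K →+* MvPolynomial (Fin n) K :=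
  (aeval (R := K) (fun o : Option (Fin n) => o.elim 1 X)).toRingHom

def NormalMon {K σ : Type*} [CommSemiring K] (lt : (σ →₀ ℕ) → (σ →₀ ℕ) → Prop)
    (Jset : Set (MvPolynomial σ K)) : Set (σ →₀ ℕ) :=
  {w | ∀ f ∈ Jset, f ≠ 0 → ∀ m, IsLM lt f m → ¬ monDvd m w}

def MinGB {K σ : Type*} [CommSemiring K] (lt : (σ →₀ ℕ) → (σ →₀ ℕ) → Prop)
    (G Jset : Set (MvPolynomial σ K)) : Prop :=
  IsGB lt G Jset ∧ ∀ g ∈ G, ∀ g' ∈ G, g ≠ g' →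
    ∀ mg mg', IsLM lt g mg → IsLM lt g' mg' → ¬ monDvd mg mg'

section Stmt7Aux

variable {n : ℕ} {K : Type*} [CommSemiring K]
lemma xpart_apply (M : Option (Fin n) →₀ ℕ) (i : Fin n) : xpart M i = M (some i) := rfl
lemma xpart_add (a b : Option (Fin n) →₀ ℕ) : xpart (a + b) = xpart a + xpart b := by
  ext i; simp [xpart_apply]
lemma xpart_mapDomain_some (d : Fin n →₀ ℕ) : xpart (Finsupp.mapDomain some d) = d := by
  ext i; rw [xpart_apply, Finsupp.mapDomain_apply (Option.some_injective _)]
lemma xpart_single_none (k : ℕ) : xpart (Finsupp.single (none : Option (Fin n)) k) = 0 := by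
  ext i; rw [xpart_apply, Finsupp.single_eq_of_ne (by simp)]; rfl
lemma mdeg_add (a b : Option (Fin n) →₀ ℕ) : mdeg (a + b) = mdeg a + mdeg b :=
  Finsupp.sum_add_index' (fun _ => rfl) (fun _ _ _ => rfl)
lemma mdeg_single {σ : Type*} (o : σ) (k : ℕ) : mdeg (Finsupp.single o k) = k :=
  Finsupp.sum_single_index rfl
lemma mdeg_mapDomain (d : Fin n →₀ ℕ) : mdeg (Finsupp.mapDomain (some : Fin n → Option (Fin n)) d) = mdeg d :=
  Finsupp.sum_mapDomain_index (fun _ => rfl) (fun _ _ _ => rfl)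
lemma option_decomp (M : Option (Fin n) →₀ ℕ) :
    M = Finsupp.mapDomain some (xpart M) + Finsupp.single none (M none) := by
  ext o
  cases o with
  | none =>
    rw [Finsupp.add_apply, Finsupp.mapDomain_notin_range _ _ (by simp), Finsupp.single_eq_same]
    simp
  | some i =>
    rw [Finsupp.add_apply, Finsupp.mapDomain_apply (Option.some_injective _),
      Finsupp.single_eq_of_ne (by simp), xpart_apply]
    simp
lemma mdeg_eq_xpart_add_none (M : Option (Fin n) →₀ ℕ) :
    mdeg M = mdeg (xpart M) + M none := by
  conv_lhs => rw [option_decomp M]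
  rw [mdeg_add, mdeg_mapDomain, mdeg_single]

/-- homogenized exponent -/
noncomputable def hm {n : ℕ} (D : ℕ) (d : Fin n →₀ ℕ) : Option (Fin n) →₀ ℕ :=
  Finsupp.mapDomain some d + Finsupp.single none (D - mdeg d)

lemma xpart_hm (D : ℕ) (d : Fin n →₀ ℕ) : xpart (hm D d) = d := by
  rw [hm, xpart_add, xpart_mapDomain_some, xpart_single_none, add_zero]

lemma hmz_eq (f : MvPolynomial (Fin n) K) :
    hmz f = f.support.sum fun d => monomial (hm f.totalDegree d) (coeff d f) := rfl

lemma hmz_coeff (f : MvPolynomial (Fin n) K) (d : Fin n →₀ ℕ) :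
    coeff (hm f.totalDegree d) (hmz f) = coeff d f := by
  classical
  rw [hmz_eq, coeff_sum]
  have h1 : ∀ e ∈ f.support,
      coeff (hm f.totalDegree d) (monomial (hm f.totalDegree e) (coeff e f))
        = if e = d then coeff e f else 0 := by
    intro e _
    rw [coeff_monomial]
    congr 1
    exact propext ⟨fun h => by have := congrArg xpart h; rwa [xpart_hm, xpart_hm] at this,
      fun h => by rw [h]⟩
  rw [Finset.sum_congr rfl h1, Finset.sum_ite_eq' f.support d (fun e => coeff e f)]
  split
  · rfl
  · next h => exact (notMem_support_iff.1 h).symm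

lemma hmz_support_subset {f : MvPolynomial (Fin n) K} {M : Option (Fin n) →₀ ℕ}
    (hM : M ∈ (hmz f).support) : ∃ d ∈ f.support, M = hm f.totalDegree d := by
  classical
  rw [hmz_eq] at hM
  have := MvPolynomial.support_sum hM
  obtain ⟨d, hd, hMd⟩ := Finset.mem_biUnion.1 this
  refine ⟨d, hd, ?_⟩
  have := support_monomial_subset hMd
  simpa using this

lemma mem_support_hmz {f : MvPolynomial (Fin n) K} {d : Fin n →₀ ℕ}
    (hd : d ∈ f.support) : hm f.totalDegree d ∈ (hmz f).support := by
  rw [mem_support_iff, hmz_coeff]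
  exact mem_support_iff.1 hd

lemma mdeg_hm {f : MvPolynomial (Fin n) K} {d : Fin n →₀ ℕ} (hd : d ∈ f.support) :
    mdeg (hm f.totalDegree d) = f.totalDegree := by
  rw [hm, mdeg_add, mdeg_mapDomain, mdeg_single]
  have : mdeg d ≤ f.totalDegree := le_totalDegree hd
  omega

lemma hmz_homogeneous {f : MvPolynomial (Fin n) K} {M : Option (Fin n) →₀ ℕ}
    (hM : M ∈ (hmz f).support) : mdeg M = f.totalDegree := by
  obtain ⟨d, hd, rfl⟩ := hmz_support_subset hM
  exact mdeg_hm hd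

lemma hmz_zero : hmz (0 : MvPolynomial (Fin n) K) = 0 := by
  rw [hmz_eq]; simp

lemma hmz_ne_zero {f : MvPolynomial (Fin n) K} (hf : f ≠ 0) : hmz f ≠ 0 := by
  obtain ⟨d, hd⟩ := (support_nonempty.2 hf)
  intro h
  have := mem_support_hmz hd
  rw [h] at this
  simp at this

lemma deh_monomial (M : Option (Fin n) →₀ ℕ) (c : K) :
    deh (monomial M c) = monomial (xpart M) c := by
  have key : ∀ (d : Fin n →₀ ℕ) (k : ℕ),
      deh (monomial (Finsupp.mapDomain some d + Finsupp.single none k) c) = monomial d c := by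
    intro d k
    rw [deh, aeval_monomial, Finsupp.prod_add_index (fun _ _ => pow_zero _)
      (fun _ _ _ _ => pow_add _ _ _), Finsupp.prod_single_index]
    on_goal 2 => exact pow_zero _
    rw [Finsupp.prod_mapDomain_index_inj (Option.some_injective _)]
    simp only [Option.elim, one_pow, mul_one]
    rw [monomial_eq]
    rfl
  conv_lhs => rw [option_decomp M]
  exact key _ _

lemma deh_sum_eq (F : MvPolynomial (Option (Fin n)) K) :
    deh F = F.support.sum fun m => monomial (xpart m) (coeff m F) := by
  conv_lhs => rw [← support_sum_monomial_coeff F]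
  rw [deh, map_sum]
  exact Finset.sum_congr rfl fun m _ => deh_monomial m (coeff m F)

lemma deh_hmz (f : MvPolynomial (Fin n) K) : deh (hmz f) = f := by
  rw [hmz_eq, deh, map_sum]
  have : ∀ d ∈ f.support, (aeval (fun o : Option (Fin n) => o.elim 1 X))
      (monomial (hm f.totalDegree d) (coeff d f)) = monomial d (coeff d f) := by
    intro d _
    rw [show (aeval (fun o : Option (Fin n) => o.elim 1 (X : Fin n → MvPolynomial (Fin n) K)))
      (monomial (hm f.totalDegree d) (coeff d f)) = deh (monomial (hm f.totalDegree d) (coeff d f)) from rfl,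
      deh_monomial, xpart_hm]
  rw [Finset.sum_congr rfl this, support_sum_monomial_coeff]

lemma deh_support_subset (F : MvPolynomial (Option (Fin n)) K) :
    (deh F).support ⊆ F.support.image xpart := by
  classical
  rw [deh_sum_eq]
  intro d hd
  have := MvPolynomial.support_sum hd
  obtain ⟨m, hm', hdm⟩ := Finset.mem_biUnion.1 this
  have := support_monomial_subset hdm
  simp only [Finset.mem_singleton] at this
  exact Finset.mem_image.2 ⟨m, hm', this.symm⟩


variable {lt : (Fin n →₀ ℕ) → (Fin n →₀ ℕ) → Prop}


lemma finsupp_option_ext {M₁ M₂ : Option (Fin n) →₀ ℕ} (hx : xpart M₁ = xpart M₂)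
    (hn : M₁ none = M₂ none) : M₁ = M₂ := by
  rw [option_decomp M₁, option_decomp M₂, hx, hn]



lemma ltT_total (hlt : GoodOrder lt) (M₁ M₂ : Option (Fin n) →₀ ℕ) (h : M₁ ≠ M₂) :
    ltT lt M₁ M₂ ∨ ltT lt M₂ M₁ := by
  by_cases hx : xpart M₁ = xpart M₂
  · have hn : M₁ none ≠ M₂ none := fun hn => h (finsupp_option_ext hx hn)
    rcases Nat.lt_or_ge (M₁ none) (M₂ none) with h' | h'
    · exact Or.inl (Or.inr ⟨hx, h'⟩)
    · exact Or.inr (Or.inr ⟨hx.symm, lt_of_le_of_ne h' (Ne.symm hn)⟩)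
  · rcases hlt.1 _ _ hx with h' | h'
    · exact Or.inl (Or.inl h')
    · exact Or.inr (Or.inl h')

lemma ltT_asymm (hlt : GoodOrder lt) (M₁ M₂ : Option (Fin n) →₀ ℕ)
    (h : ltT lt M₁ M₂) : ¬ ltT lt M₂ M₁ := by
  rcases h with h | ⟨hx, hn⟩ <;> rintro (h' | ⟨hx', hn'⟩)
  · exact hlt.2.1 _ _ h h'
  · exact hlt.2.1 _ _ h (hx' ▸ h)
  · exact hlt.2.1 _ _ h' (hx ▸ h')
  · omega

lemma ltT_trans (hlt : GoodOrder lt) (M₁ M₂ M₃ : Option (Fin n) →₀ ℕ)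
    (h : ltT lt M₁ M₂) (h' : ltT lt M₂ M₃) : ltT lt M₁ M₃ := by
  rcases h with h | ⟨hx, hn⟩ <;> rcases h' with h' | ⟨hx', hn'⟩
  · exact Or.inl (hlt.2.2.1 _ _ _ h h')
  · exact Or.inl (hx' ▸ h)
  · exact Or.inl (hx ▸ h')
  · exact Or.inr ⟨hx.trans hx', hn.trans hn'⟩

lemma finset_exists_max {α : Type*} (lt' : α → α → Prop)
    (htot : ∀ a b, a ≠ b → lt' a b ∨ lt' b a)
    (htr : ∀ a b c, lt' a b → lt' b c → lt' a c)
    (s : Finset α) (hs : s.Nonempty) : ∃ m ∈ s, ∀ x ∈ s, x ≠ m → lt' x m := by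
  classical
  induction s using Finset.induction_on with
  | empty => exact absurd hs (by simp)
  | insert a s ha ih =>
    by_cases hs' : s.Nonempty
    · obtain ⟨m, hm, hmax⟩ := ih hs'
      have ham : a ≠ m := fun h => ha (h ▸ hm)
      rcases htot a m ham with h | h
      · refine ⟨m, Finset.mem_insert_of_mem hm, fun x hx hxm => ?_⟩
        rcases Finset.mem_insert.1 hx with rfl | hx'
        · exact h
        · exact hmax x hx' hxm
      · refine ⟨a, Finset.mem_insert_self _ _, fun x hx hxa => ?_⟩
        rcases Finset.mem_insert.1 hx with rfl | hx'
        · exact absurd rfl hxa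
        · by_cases hxm : x = m
          · exact hxm ▸ h
          · exact htr x m a (hmax x hx' hxm) h
    · rw [Finset.not_nonempty_iff_eq_empty.1 hs']
      exact ⟨a, by simp, fun x hx hxa => absurd (by simpa using hx) hxa⟩

lemma exists_isLM {σ : Type*} (lt' : (σ →₀ ℕ) → (σ →₀ ℕ) → Prop)
    (htot : ∀ a b, a ≠ b → lt' a b ∨ lt' b a)
    (htr : ∀ a b c, lt' a b → lt' b c → lt' a c)
    {f : MvPolynomial σ K} (hf : f ≠ 0) : ∃ m, IsLM lt' f m := by
  obtain ⟨m, hm, hmax⟩ := finset_exists_max lt' htot htr f.support (support_nonempty.2 hf)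
  exact ⟨m, hm, hmax⟩

lemma isLM_unique {σ : Type*} {lt' : (σ →₀ ℕ) → (σ →₀ ℕ) → Prop}
    (hasymm : ∀ a b, lt' a b → ¬ lt' b a) {f : MvPolynomial σ K} {m m' : σ →₀ ℕ}
    (h : IsLM lt' f m) (h' : IsLM lt' f m') : m = m' := by
  by_contra hne
  exact hasymm _ _ (h'.2 m h.1 hne) (h.2 m' h'.1 (Ne.symm hne))

lemma mdeg_isLM (hlt : GoodOrder lt) {f : MvPolynomial (Fin n) K} {m : Fin n →₀ ℕ}
    (hf : f ≠ 0) (h : IsLM lt f m) : mdeg m = f.totalDegree := by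
  have hle : mdeg m ≤ f.totalDegree := le_totalDegree h.1
  obtain ⟨d, hd, hdeq⟩ := Finset.exists_mem_eq_sup f.support (support_nonempty.2 hf)
      (fun d => d.sum fun _ e => e)
  rcases eq_or_ne d m with rfl | hne
  · exact le_antisymm hle (le_of_eq hdeq)
  · by_contra hne'
    have h1 : mdeg m < mdeg d := by
      have : mdeg d = f.totalDegree := hdeq.symm
      omega
    exact hlt.2.1 _ _ (hlt.2.2.2.1 _ _ h1) (h.2 d hd hne)

lemma isLM_hmz (hlt : GoodOrder lt) {f : MvPolynomial (Fin n) K} {m : Fin n →₀ ℕ}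
    (hf : f ≠ 0) (h : IsLM lt f m) :
    IsLM (ltT lt) (hmz f) (Finsupp.mapDomain some m) := by
  have hd : mdeg m = f.totalDegree := mdeg_isLM hlt hf h
  have hm0 : hm f.totalDegree m = Finsupp.mapDomain some m := by
    rw [hm, ← hd, Nat.sub_self, Finsupp.single_zero, add_zero]
  constructor
  · rw [← hm0]; exact mem_support_hmz h.1
  · intro M' hM' hne
    obtain ⟨d, hd', rfl⟩ := hmz_support_subset hM'
    have hdm : d ≠ m := by rintro rfl; exact hne hm0
    left
    rw [xpart_hm, xpart_mapDomain_some]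
    exact h.2 d hd' hdm

lemma isLM_hmz_inv (hlt : GoodOrder lt) {f : MvPolynomial (Fin n) K} {M : Option (Fin n) →₀ ℕ}
    (hf : f ≠ 0) (H : IsLM (ltT lt) (hmz f) M) :
    ∃ m, IsLM lt f m ∧ M = Finsupp.mapDomain some m := by
  obtain ⟨m, hm⟩ := exists_isLM lt hlt.1 hlt.2.2.1 hf
  exact ⟨m, hm, isLM_unique (ltT_asymm hlt) H (isLM_hmz hlt hf hm)⟩

lemma mdeg_eq_degree {σ : Type*} (d : σ →₀ ℕ) : mdeg d = d.degree := rfl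

lemma deh_mem_span {I : Ideal (MvPolynomial (Fin n) K)} {F : MvPolynomial (Option (Fin n)) K}
    (hF : F ∈ Ideal.span (HSet I)) : deh F ∈ I := by
  have hle : Ideal.span (HSet I) ≤ Ideal.comap (dehHom (K := K) (n := n)) I := by
    rw [Ideal.span_le]
    rintro F ⟨f, hf, _, rfl⟩
    show dehHom (hmz f) ∈ I
    show deh (hmz f) ∈ I
    rw [deh_hmz]
    exact hf
  exact hle hF

lemma hmz_isHomogeneous (f : MvPolynomial (Fin n) K) :
    (hmz f).IsHomogeneous f.totalDegree := by
  intro d hd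
  rw [show (1 : Option (Fin n) → ℕ) = fun _ => 1 from rfl, ← Finsupp.degree_eq_weight_one, ← mdeg_eq_degree]
  exact hmz_homogeneous (mem_support_iff.2 hd)

lemma comp_mem_span (I : Ideal (MvPolynomial (Fin n) K)) {F : MvPolynomial (Option (Fin n)) K}
    (hF : F ∈ Ideal.span (HSet I)) (p : ℕ) :
    homogeneousComponent p F ∈ Ideal.span (HSet I) := by
  classical
  letI := MvPolynomial.gradedAlgebra (σ := Option (Fin n)) (R := K)
  have hhom : Ideal.IsHomogeneous (homogeneousSubmodule (Option (Fin n)) K)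
      (Ideal.span (HSet I)) := by
    apply Ideal.homogeneous_span
    rintro x ⟨f, _, _, rfl⟩
    exact ⟨f.totalDegree, (mem_homogeneousSubmodule _ _).2 (hmz_isHomogeneous f)⟩
  have h2 := hhom p hF
  rwa [← DirectSum.Decomposition.decompose'_eq,
    MvPolynomial.decomposition.decompose'_apply] at h2

lemma support_comp_subset (F : MvPolynomial (Option (Fin n)) K) (p : ℕ) :
    (homogeneousComponent p F).support ⊆ F.support := by
  intro m hm
  rw [mem_support_iff, coeff_homogeneousComponent] at hm
  rw [mem_support_iff]
  intro h
  rw [h] at hm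
  simp at hm

lemma mdeg_of_mem_comp {F : MvPolynomial (Option (Fin n)) K} {p : ℕ}
    {m : Option (Fin n) →₀ ℕ} (hm : m ∈ (homogeneousComponent p F).support) : mdeg m = p := by
  rw [mem_support_iff, coeff_homogeneousComponent] at hm
  rw [mdeg_eq_degree]
  by_contra h
  rw [if_neg h] at hm
  exact hm rfl

lemma coeff_comp_self {F : MvPolynomial (Option (Fin n)) K} {m : Option (Fin n) →₀ ℕ} :
    coeff m (homogeneousComponent (mdeg m) F) = coeff m F := by
  rw [coeff_homogeneousComponent, if_pos (mdeg_eq_degree m).symm]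


lemma xpart_injOn {F : MvPolynomial (Option (Fin n)) K} {D : ℕ}
    (hhom : ∀ m ∈ F.support, mdeg m = D) :
    ∀ m₁ ∈ F.support, ∀ m₂ ∈ F.support, xpart m₁ = xpart m₂ → m₁ = m₂ := by
  intro m₁ h₁ m₂ h₂ hx
  have e₁ := mdeg_eq_xpart_add_none m₁
  have e₂ := mdeg_eq_xpart_add_none m₂
  rw [hhom m₁ h₁] at e₁
  rw [hhom m₂ h₂] at e₂
  rw [option_decomp m₁, option_decomp m₂, hx]
  have : m₁ none = m₂ none := by rw [hx] at e₁; omega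
  rw [this]

lemma coeff_deh_of_homog {F : MvPolynomial (Option (Fin n)) K} {D : ℕ}
    (hhom : ∀ m ∈ F.support, mdeg m = D) {m₀ : Option (Fin n) →₀ ℕ} (h₀ : m₀ ∈ F.support) :
    coeff (xpart m₀) (deh F) = coeff m₀ F := by
  classical
  rw [deh_sum_eq, coeff_sum]
  have h1 : ∀ m ∈ F.support, coeff (xpart m₀) (monomial (xpart m) (coeff m F))
      = if m = m₀ then coeff m F else 0 := by
    intro m hmm
    rw [coeff_monomial]
    congr 1
    exact propext ⟨fun h => xpart_injOn hhom m hmm m₀ h₀ h, fun h => by rw [h]⟩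
  rw [Finset.sum_congr rfl h1, Finset.sum_ite_eq' F.support m₀ (fun m => coeff m F), if_pos h₀]

/-- main lemma for the forward direction, homogeneous case -/
lemma homog_case (hlt : GoodOrder lt) {I : Ideal (MvPolynomial (Fin n) K)}
    {G : Set (MvPolynomial (Fin n) K)}
    (hGB : IsGB lt G (I : Set (MvPolynomial (Fin n) K)))
    {F : MvPolynomial (Option (Fin n)) K} (hFs : F ∈ Ideal.span (HSet I))
    {D : ℕ} (hhom : ∀ m ∈ F.support, mdeg m = D)
    {M : Option (Fin n) →₀ ℕ} (hM : IsLM (ltT lt) F M) :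
    ∃ g ∈ hmz '' G, ∃ mg, IsLM (ltT lt) g mg ∧ monDvd mg M := by
  classical
  set f := deh F with hfdef
  have hfI : f ∈ I := deh_mem_span hFs
  have hcoeffM : coeff (xpart M) f = coeff M F := coeff_deh_of_homog hhom hM.1
  have hxM : xpart M ∈ f.support := by
    rw [mem_support_iff, hcoeffM]
    exact mem_support_iff.1 hM.1
  have hf0 : f ≠ 0 := by
    intro h
    rw [h] at hxM
    simp at hxM
  have hLMf : IsLM lt f (xpart M) := by
    refine ⟨hxM, fun d' hd' hne => ?_⟩
    obtain ⟨m', hm', rfl⟩ := Finset.mem_image.1 (deh_support_subset F hd')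
    have hm'M : m' ≠ M := fun h => hne (by rw [h])
    rcases hM.2 m' hm' hm'M with h | ⟨hx, _⟩
    · exact h
    · exact absurd hx hne
  obtain ⟨g, hgG, mf, mg, hlmf, hlmg, c, hc⟩ := hGB.2 f hfI hf0
  have hmf : mf = xpart M := isLM_unique hlt.2.1 hlmf hLMf
  have hg0 : g ≠ 0 := by
    intro h
    have := hlmg.1
    rw [h] at this
    simp at this
  refine ⟨hmz g, Set.mem_image_of_mem _ hgG, Finsupp.mapDomain some mg,
    isLM_hmz hlt hg0 hlmg, Finsupp.mapDomain some c + Finsupp.single none (M none), ?_⟩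
  rw [← add_assoc, ← Finsupp.mapDomain_add, ← hc, hmf]
  exact option_decomp M


end Stmt7Aux

theorem stmt7 {K : Type*} [Field K] {n : ℕ}
    (lt : (Fin n →₀ ℕ) → (Fin n →₀ ℕ) → Prop) (hlt : GoodOrder lt)
    (I : Ideal (MvPolynomial (Fin n) K)) (G : Set (MvPolynomial (Fin n) K))
    (hGI : G ⊆ (I : Set (MvPolynomial (Fin n) K))) :
    IsGB lt G (I : Set (MvPolynomial (Fin n) K)) ↔
      IsGB (ltT lt) (hmz '' G)
        ((Ideal.span (HSet I) : Ideal (MvPolynomial (Option (Fin n)) K)) :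
          Set (MvPolynomial (Option (Fin n)) K)) := by
  have hsub : hmz '' G ⊆ (Ideal.span (HSet I) : Set (MvPolynomial (Option (Fin n)) K)) := by
    rintro _ ⟨g, hg, rfl⟩
    by_cases hg0 : g = 0
    · rw [hg0, hmz_zero]
      exact Submodule.zero_mem _
    · exact Ideal.subset_span ⟨g, hGI hg, hg0, rfl⟩
  constructor
  · intro hGB
    refine ⟨hsub, fun F hF hF0 => ?_⟩
    obtain ⟨M, hM⟩ := exists_isLM (ltT lt) (ltT_total hlt) (ltT_trans hlt) hF0
    set p := mdeg M with hp
    have hFp : homogeneousComponent p F ∈ Ideal.span (HSet I) := comp_mem_span I hF p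
    have hMp : M ∈ (homogeneousComponent p F).support := by
      rw [MvPolynomial.mem_support_iff, hp, coeff_comp_self]
      exact MvPolynomial.mem_support_iff.1 hM.1
    have hMc : IsLM (ltT lt) (homogeneousComponent p F) M :=
      ⟨hMp, fun m' hm' hne => hM.2 m' (support_comp_subset F p hm') hne⟩
    obtain ⟨g, hgG, mg, hlmg, hdvd⟩ :=
      homog_case hlt hGB hFp (fun m hm => mdeg_of_mem_comp hm) hMc
    exact ⟨g, hgG, M, mg, hM, hlmg, hdvd⟩
  · intro hGB
    refine ⟨hGI, fun f hf hf0 => ?_⟩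
    have hhmzf : hmz f ∈ Ideal.span (HSet I) := Ideal.subset_span ⟨f, hf, hf0, rfl⟩
    obtain ⟨gh, hghG, mF, mg', hlmF, hlmg', c, hc⟩ :=
      hGB.2 (hmz f) hhmzf (hmz_ne_zero hf0)
    obtain ⟨g, hgG, rfl⟩ := hghG
    have hg0 : g ≠ 0 := by
      rintro rfl
      have := hlmg'.1
      rw [hmz_zero] at this
      simp at this
    obtain ⟨m, hm, rfl⟩ := isLM_hmz_inv hlt hf0 hlmF
    obtain ⟨mg, hmg, rfl⟩ := isLM_hmz_inv hlt hg0 hlmg'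
    refine ⟨g, hgG, m, mg, hm, hmg, xpart c, ?_⟩
    have := congrArg xpart hc
    rwa [xpart_add, xpart_mapDomain_some, xpart_mapDomain_some] at this
end

section
/- Let J be a graded ideal of K[x₁,…,xₙ,t] and G a minimal homogeneous Gröbner basis of J w.r.t. ≺_t. Then the following are equivalent: (i) every element of G is dh-closed; (ii) ⟨(J∗)*⟩ = J; (iii) the quotient K[x₁,…,xₙ,t]/J has no t-torsion, i.e., tF ∈ J implies F ∈ J; (iv) t·K[x₁,…,xₙ,t] ∩ J = t·J. -/
open MvPolynomial

namespace Stmt12Aux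
open MvPolynomial Finsupp

section Basics
variable {n : ℕ}

lemma mdeg_eq_degree {σ : Type*} (d : σ →₀ ℕ) : mdeg d = Finsupp.degree d := rfl

lemma mdeg_add {σ : Type*} (a b : σ →₀ ℕ) : mdeg (a + b) = mdeg a + mdeg b := by
  unfold mdeg; exact Finsupp.sum_add_index' (fun _ => rfl) (fun _ _ _ => rfl)

lemma mdeg_single {σ : Type*} (s : σ) (k : ℕ) : mdeg (Finsupp.single s k) = k := by
  unfold mdeg; simp [Finsupp.sum_single_index]

lemma homog_mdeg {K σ : Type*} [CommSemiring K] {F : MvPolynomial σ K} {p : ℕ}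
    (h : F.IsHomogeneous p) {d} (hd : d ∈ F.support) : mdeg d = p := by
  have := h (MvPolynomial.mem_support_iff.mp hd)
  rw [mdeg_eq_degree, Finsupp.degree_eq_weight_one]; exact this

lemma totalDegree_eq_sup_mdeg {K σ : Type*} [CommSemiring K] (f : MvPolynomial σ K) :
    f.totalDegree = f.support.sup mdeg := rfl

@[simp] lemma xpart_apply (M : Option (Fin n) →₀ ℕ) (i : Fin n) : xpart M i = M (some i) := rfl

lemma xpart_add (a b : Option (Fin n) →₀ ℕ) : xpart (a + b) = xpart a + xpart b := by
  ext i; simp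

lemma xpart_mapDomain (e : Fin n →₀ ℕ) : xpart (Finsupp.mapDomain some e) = e := by
  ext i; rw [xpart_apply, Finsupp.mapDomain_apply (Option.some_injective _)]

lemma xpart_single_none (k : ℕ) : xpart (Finsupp.single (none : Option (Fin n)) k) = 0 := by
  ext i; simp

lemma mapDomain_some_apply_none (e : Fin n →₀ ℕ) :
    (Finsupp.mapDomain some e) (none : Option (Fin n)) = 0 := by
  rw [Finsupp.mapDomain_notin_range]; simp

lemma decomp (M : Option (Fin n) →₀ ℕ) :
    M = Finsupp.mapDomain some (xpart M) + Finsupp.single none (M none) := by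
  ext o
  cases o with
  | none => simp [mapDomain_some_apply_none]
  | some i => simp [Finsupp.mapDomain_apply (Option.some_injective _)]

lemma mdeg_mapDomain (e : Fin n →₀ ℕ) : mdeg (Finsupp.mapDomain some e) = mdeg e := by
  unfold mdeg; exact Finsupp.sum_mapDomain_index (fun _ => rfl) (fun _ _ _ => rfl)

lemma mdeg_decomp (M : Option (Fin n) →₀ ℕ) : mdeg M = mdeg (xpart M) + M none := by
  conv_lhs => rw [decomp M]
  rw [mdeg_add, mdeg_mapDomain, mdeg_single]

lemma monDvd_iff {σ : Type*} (a b : σ →₀ ℕ) : monDvd a b ↔ a ≤ b := le_iff_exists_add.symm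

lemma monDvd_mdeg {σ : Type*} {a b : σ →₀ ℕ} (h : monDvd a b) : mdeg a ≤ mdeg b := by
  obtain ⟨c, rfl⟩ := h; rw [mdeg_add]; omega

lemma monDvd_trans {σ : Type*} {a b c : σ →₀ ℕ} (h : monDvd a b) (h' : monDvd b c) :
    monDvd a c := by
  obtain ⟨u, rfl⟩ := h; obtain ⟨v, rfl⟩ := h'; exact ⟨u + v, add_assoc _ _ _⟩

end Basics

section Max
variable {α : Type*} {r : α → α → Prop}

lemma finset_max (htri : ∀ a b : α, a ≠ b → r a b ∨ r b a)
    (htrans : ∀ a b c, r a b → r b c → r a c) :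
    ∀ s : Finset α, s.Nonempty → ∃ m ∈ s, ∀ x ∈ s, x ≠ m → r x m := by
  classical
  intro s
  induction s using Finset.induction with
  | empty => rintro ⟨x, hx⟩; simp at hx
  | @insert a s' ha ih =>
    intro _
    rcases s'.eq_empty_or_nonempty with rfl | hne
    · exact ⟨a, by simp, by simp⟩
    · obtain ⟨m, hm, hmax⟩ := ih hne
      have ham : a ≠ m := fun h => ha (h ▸ hm)
      rcases htri a m ham with h1 | h1
      · refine ⟨m, Finset.mem_insert_of_mem hm, ?_⟩
        intro x hx hxm
        rcases Finset.mem_insert.mp hx with rfl | hx'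
        · exact h1
        · exact hmax x hx' hxm
      · refine ⟨a, Finset.mem_insert_self _ _, ?_⟩
        intro x hx hxa
        rcases Finset.mem_insert.mp hx with rfl | hx'
        · exact absurd rfl hxa
        · by_cases hxm : x = m
          · exact hxm ▸ h1
          · exact htrans x m a (hmax x hx' hxm) h1

lemma exists_isLM {K σ : Type*} [CommSemiring K] {r : (σ→₀ℕ)→(σ→₀ℕ)→Prop}
    (htri : ∀ a b, a ≠ b → r a b ∨ r b a)
    (htrans : ∀ a b c, r a b → r b c → r a c)
    {f : MvPolynomial σ K} (hf : f ≠ 0) : ∃ m, IsLM r f m := by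
  obtain ⟨m, hm, hmax⟩ := finset_max htri htrans f.support
    (by rwa [Finset.nonempty_iff_ne_empty, Ne, MvPolynomial.support_eq_empty])
  exact ⟨m, hm, hmax⟩

lemma isLM_unique {K σ : Type*} [CommSemiring K] {r : (σ→₀ℕ)→(σ→₀ℕ)→Prop}
    (hasym : ∀ a b, r a b → ¬ r b a)
    {f : MvPolynomial σ K} {m m' : σ →₀ ℕ} (h : IsLM r f m) (h' : IsLM r f m') : m = m' := by
  by_contra hne
  exact hasym _ _ (h.2 m' h'.1 (fun h => hne h.symm)) (h'.2 m h.1 hne)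

end Max

section Order
variable {n : ℕ} {lt : (Fin n →₀ ℕ) → (Fin n →₀ ℕ) → Prop} (hlt : GoodOrder lt)
include hlt

lemma lt_irrefl' (a : Fin n →₀ ℕ) : ¬ lt a a := fun h => hlt.2.1 a a h h

lemma ltT_irrefl (M : Option (Fin n) →₀ ℕ) : ¬ ltT lt M M := by
  rintro (h | ⟨-, h⟩)
  · exact lt_irrefl' hlt _ h
  · omega

omit hlt in
lemma eq_of_xpart_eq {M₁ M₂ : Option (Fin n) →₀ ℕ} (hx : xpart M₁ = xpart M₂)
    (hn : M₁ none = M₂ none) : M₁ = M₂ := by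
  rw [decomp M₁, decomp M₂, hx, hn]

lemma ltT_trichot {a b : Option (Fin n) →₀ ℕ} (hne : a ≠ b) : ltT lt a b ∨ ltT lt b a := by
  by_cases hx : xpart a = xpart b
  · have hn : a none ≠ b none := fun h => hne (eq_of_xpart_eq hx h)
    rcases Nat.lt_or_ge (a none) (b none) with h | h
    · exact Or.inl (Or.inr ⟨hx, h⟩)
    · exact Or.inr (Or.inr ⟨hx.symm, lt_of_le_of_ne h (Ne.symm hn)⟩)
  · rcases hlt.1 _ _ hx with h | h
    · exact Or.inl (Or.inl h)
    · exact Or.inr (Or.inl h)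

lemma ltT_asymm {a b : Option (Fin n) →₀ ℕ} (h : ltT lt a b) : ¬ ltT lt b a := by
  rintro (h' | ⟨hx', hn'⟩) <;> rcases h with h | ⟨hx, hn⟩
  · exact hlt.2.1 _ _ h h'
  · exact lt_irrefl' hlt _ (hx ▸ h')
  · exact lt_irrefl' hlt _ (hx' ▸ h)
  · omega

lemma ltT_trans {a b c : Option (Fin n) →₀ ℕ} (h : ltT lt a b) (h' : ltT lt b c) :
    ltT lt a c := by
  rcases h with h | ⟨hx, hn⟩ <;> rcases h' with h' | ⟨hx', hn'⟩
  · exact Or.inl (hlt.2.2.1 _ _ _ h h')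
  · exact Or.inl (hx' ▸ h)
  · exact Or.inl (hx ▸ h')
  · exact Or.inr ⟨hx.trans hx', hn.trans hn'⟩

lemma ltT_add {a b : Option (Fin n) →₀ ℕ} (c : Option (Fin n) →₀ ℕ) (h : ltT lt a b) :
    ltT lt (a + c) (b + c) := by
  rcases h with h | ⟨hx, hn⟩
  · exact Or.inl (by rw [xpart_add, xpart_add]; exact hlt.2.2.2.2 _ _ _ h)
  · refine Or.inr ⟨by rw [xpart_add, xpart_add, hx], ?_⟩
    simp only [Finsupp.add_apply]; omega

end Order
end Stmt12Aux
namespace Stmt12Aux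
open MvPolynomial Finsupp

section DehHmz
variable {K : Type*} [Field K] {n : ℕ}

noncomputable def emb (p : ℕ) (e : Fin n →₀ ℕ) : Option (Fin n) →₀ ℕ :=
  Finsupp.mapDomain some e + Finsupp.single none (p - mdeg e)

lemma xpart_emb (p : ℕ) (e : Fin n →₀ ℕ) : xpart (emb p e) = e := by
  rw [emb, xpart_add, xpart_mapDomain, xpart_single_none, add_zero]

lemma emb_inj (p : ℕ) : Function.Injective (emb (n := n) p) := fun a b h => by
  rw [← xpart_emb p a, h, xpart_emb]

lemma emb_none (p : ℕ) (e : Fin n →₀ ℕ) : (emb p e) none = p - mdeg e := by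
  simp [emb, mapDomain_some_apply_none]

lemma mdeg_emb {p : ℕ} {e : Fin n →₀ ℕ} (h : mdeg e ≤ p) : mdeg (emb p e) = p := by
  rw [emb, mdeg_add, mdeg_mapDomain, mdeg_single]; omega

lemma homog_mem_supp_eq {F : MvPolynomial (Option (Fin n)) K} {p : ℕ}
    (h : F.IsHomogeneous p) {d} (hd : d ∈ F.support) : d = emb p (xpart d) := by
  have h1 := homog_mdeg h hd
  have h2 := mdeg_decomp d
  rw [emb]
  conv_lhs => rw [decomp d]
  congr 2
  omega

lemma deh_monomial (d : Option (Fin n) →₀ ℕ) (c : K) :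
    deh (monomial d c) = monomial (xpart d) c := by
  rw [show deh (monomial d c) = aeval (fun o : Option (Fin n) => o.elim 1 X) (monomial d c)
    from rfl, aeval_monomial, monomial_eq, algebraMap_eq]
  congr 1
  conv_lhs => rw [decomp d]
  rw [Finsupp.prod_add_index' (fun a => pow_zero _) (fun a b c => pow_add _ _ _),
    Finsupp.prod_mapDomain_index (fun a => pow_zero _) (fun a b c => pow_add _ _ _)]
  have h1 : (Finsupp.single (none : Option (Fin n)) (d none)).prod
      (fun a k => ((a.elim 1 X : MvPolynomial (Fin n) K)) ^ k) = 1 := by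
    rw [Finsupp.prod_single_index (h := fun (a : Option (Fin n)) (k : ℕ) => (Option.elim a (1 : MvPolynomial (Fin n) K) X) ^ k)
      (pow_zero _)]
    exact one_pow _
  rw [h1, mul_one]
  rfl

lemma deh_sum (F : MvPolynomial (Option (Fin n)) K) :
    deh F = ∑ d ∈ F.support, monomial (xpart d) (coeff d F) := by
  conv_lhs => rw [show deh F = aeval (fun o : Option (Fin n) => o.elim 1 X) F from rfl,
    F.as_sum, map_sum]
  exact Finset.sum_congr rfl fun d _ => deh_monomial d _

lemma coeff_deh {F : MvPolynomial (Option (Fin n)) K} {p : ℕ} (hF : F.IsHomogeneous p)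
    (e : Fin n →₀ ℕ) : coeff e (deh F) = coeff (emb p e) F := by
  classical
  rw [deh_sum, coeff_sum]
  simp_rw [coeff_monomial]
  rw [Finset.sum_eq_single (emb p e)]
  · rw [if_pos (xpart_emb p e)]
  · intro d hd hne
    rw [if_neg]
    intro hx
    exact hne (hx ▸ homog_mem_supp_eq hF hd)
  · intro h
    rw [if_pos (xpart_emb p e)]
    exact MvPolynomial.notMem_support_iff.mp h

lemma supp_deh {F : MvPolynomial (Option (Fin n)) K} {p : ℕ} (hF : F.IsHomogeneous p)
    (e : Fin n →₀ ℕ) : e ∈ (deh F).support ↔ emb p e ∈ F.support := by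
  simp [MvPolynomial.mem_support_iff, coeff_deh hF]

lemma deh_ne_zero {F : MvPolynomial (Option (Fin n)) K} {p : ℕ} (hF : F.IsHomogeneous p)
    (h0 : F ≠ 0) : deh F ≠ 0 := by
  obtain ⟨d, hd⟩ := (MvPolynomial.support_nonempty (p := F)).mpr h0
  intro h
  have : xpart d ∈ (deh F).support := by
    rw [supp_deh hF, ← homog_mem_supp_eq hF hd]; exact hd
  rw [h] at this; simp at this

lemma totalDegree_deh_le {F : MvPolynomial (Option (Fin n)) K} {p : ℕ}
    (hF : F.IsHomogeneous p) : (deh F).totalDegree ≤ p := by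
  rw [totalDegree_eq_sup_mdeg]
  apply Finset.sup_le
  intro e he
  rw [supp_deh hF] at he
  have h1 := homog_mdeg hF he
  rw [emb, mdeg_add, mdeg_mapDomain, mdeg_single] at h1
  omega

lemma mdeg_le_of_mem_supp_deh {F : MvPolynomial (Option (Fin n)) K} {p : ℕ}
    (hF : F.IsHomogeneous p) {e} (he : e ∈ (deh F).support) : mdeg e ≤ p := by
  rw [supp_deh hF] at he
  have h1 := homog_mdeg hF he
  rw [emb, mdeg_add, mdeg_mapDomain, mdeg_single] at h1
  omega

lemma hmz_eq (f : MvPolynomial (Fin n) K) :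
    hmz f = ∑ d ∈ f.support, monomial (emb f.totalDegree d) (coeff d f) := rfl

lemma hmz_zero : hmz (0 : MvPolynomial (Fin n) K) = 0 := by
  rw [hmz_eq]; simp

lemma coeff_hmz (f : MvPolynomial (Fin n) K) (e : Fin n →₀ ℕ) :
    coeff (emb f.totalDegree e) (hmz f) = coeff e f := by
  classical
  rw [hmz_eq, coeff_sum]
  simp_rw [coeff_monomial]
  rw [Finset.sum_eq_single e]
  · rw [if_pos rfl]
  · intro d hd hne
    rw [if_neg (fun h => hne (emb_inj _ h))]
  · intro h
    rw [if_pos rfl]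
    exact MvPolynomial.notMem_support_iff.mp h

lemma supp_hmz {f : MvPolynomial (Fin n) K} {M : Option (Fin n) →₀ ℕ}
    (hM : M ∈ (hmz f).support) : ∃ e ∈ f.support, M = emb f.totalDegree e := by
  classical
  rw [MvPolynomial.mem_support_iff, hmz_eq, coeff_sum] at hM
  obtain ⟨e, he, hne⟩ := Finset.exists_ne_zero_of_sum_ne_zero hM
  rw [coeff_monomial] at hne
  refine ⟨e, he, ?_⟩
  by_contra h
  rw [if_neg (fun h' => h h'.symm)] at hne
  exact hne rfl

lemma hmz_ne_zero {f : MvPolynomial (Fin n) K} (hf : f ≠ 0) : hmz f ≠ 0 := by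
  obtain ⟨e, he⟩ := (MvPolynomial.support_nonempty (p := f)).mpr hf
  intro h
  have := coeff_hmz f e
  rw [h] at this
  simp only [coeff_zero] at this
  exact MvPolynomial.mem_support_iff.mp he this.symm

lemma single_add_emb {D p : ℕ} (hDp : D ≤ p) {e : Fin n →₀ ℕ} (he : mdeg e ≤ D) :
    Finsupp.single (none : Option (Fin n)) (p - D) + emb D e = emb p e := by
  rw [emb, emb, add_comm, add_assoc, ← Finsupp.single_add]
  congr 2
  omega

lemma homog_eq_pow_mul {F : MvPolynomial (Option (Fin n)) K} {p : ℕ}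
    (hF : F.IsHomogeneous p) (h0 : F ≠ 0) :
    X none ^ (p - (deh F).totalDegree) * hmz (deh F) = F := by
  have hDp := totalDegree_deh_le hF
  rw [hmz_eq, Finset.mul_sum]
  conv_rhs => rw [F.as_sum]
  refine Finset.sum_nbij' (fun e => emb p e) (fun d => xpart d) ?_ ?_ ?_ ?_ ?_
  · intro e he; rw [← supp_deh hF]; exact he
  · intro d hd
    rw [supp_deh hF, ← homog_mem_supp_eq hF hd]; exact hd
  · intro e _; exact xpart_emb p e
  · intro d hd; exact (homog_mem_supp_eq hF hd).symm
  · intro e he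
    rw [X_pow_eq_monomial, monomial_mul, one_mul,
      single_add_emb hDp (by rw [totalDegree_eq_sup_mdeg]; exact Finset.le_sup he),
      coeff_deh hF]

end DehHmz
end Stmt12Aux
namespace Stmt12Aux
open MvPolynomial Finsupp

section Mul
variable {K : Type*} [Field K] {n : ℕ} {lt : (Fin n →₀ ℕ) → (Fin n →₀ ℕ) → Prop}

lemma X_none_eq : (X (none : Option (Fin n)) : MvPolynomial (Option (Fin n)) K)
    = monomial (Finsupp.single none 1) 1 := by rw [← X_pow_eq_monomial, pow_one]

lemma comp_t_mul (q : ℕ) (F : MvPolynomial (Option (Fin n)) K) :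
    homogeneousComponent (q + 1) (X (none : Option (Fin n)) * F) =
      X none * homogeneousComponent q F := by
  classical
  ext M
  rw [coeff_homogeneousComponent, X_none_eq, coeff_monomial_mul', coeff_monomial_mul',
    coeff_homogeneousComponent]
  by_cases hs : Finsupp.single (none : Option (Fin n)) 1 ≤ M
  · rw [if_pos hs, if_pos hs]
    have hM : M - Finsupp.single (none : Option (Fin n)) 1 + Finsupp.single none 1 = M :=
      tsub_add_cancel_of_le hs
    have hdeg : Finsupp.degree M
        = Finsupp.degree (M - Finsupp.single (none : Option (Fin n)) 1) + 1 := by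
      conv_lhs => rw [← hM]
      rw [← mdeg_eq_degree, ← mdeg_eq_degree, mdeg_add, mdeg_single]
    rw [hdeg]
    by_cases hq : Finsupp.degree (M - Finsupp.single (none : Option (Fin n)) 1) = q
    · rw [if_pos (by omega), if_pos hq]
    · rw [if_neg (by omega), if_neg hq, mul_zero]
  · rw [if_neg hs, if_neg hs, ite_self]

lemma supp_monomial_mul {g : MvPolynomial (Option (Fin n)) K} {δ : Option (Fin n) →₀ ℕ} {c : K}
    (hc : c ≠ 0) (M : Option (Fin n) →₀ ℕ) :
    M ∈ (monomial δ c * g).support ↔ ∃ d ∈ g.support, M = δ + d := by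
  classical
  rw [MvPolynomial.mem_support_iff, coeff_monomial_mul']
  constructor
  · intro h
    by_cases hd : δ ≤ M
    · rw [if_pos hd] at h
      refine ⟨M - δ, ?_, (add_tsub_cancel_of_le hd).symm⟩
      rw [MvPolynomial.mem_support_iff]
      intro h'; rw [h', mul_zero] at h; exact h rfl
    · rw [if_neg hd] at h; exact absurd rfl h
  · rintro ⟨d, hd, rfl⟩
    rw [if_pos le_self_add, add_tsub_cancel_left]
    exact mul_ne_zero hc (MvPolynomial.mem_support_iff.mp hd)

lemma coeff_monomial_mul_add {g : MvPolynomial (Option (Fin n)) K} (δ d : Option (Fin n) →₀ ℕ)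
    (c : K) : coeff (δ + d) (monomial δ c * g) = c * coeff d g := by
  rw [coeff_monomial_mul]

lemma isLM_monomial_mul (hlt : GoodOrder lt) {g : MvPolynomial (Option (Fin n)) K}
    {mg δ : Option (Fin n) →₀ ℕ} {c : K} (hc : c ≠ 0) (h : IsLM (ltT lt) g mg) :
    IsLM (ltT lt) (monomial δ c * g) (δ + mg) := by
  constructor
  · rw [supp_monomial_mul hc]; exact ⟨mg, h.1, rfl⟩
  · intro M hM hne
    rw [supp_monomial_mul hc] at hM
    obtain ⟨d, hd, rfl⟩ := hM
    have hdm : d ≠ mg := fun he => hne (by rw [he])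
    have h2 := h.2 d hd hdm
    rw [add_comm δ mg, add_comm δ d]
    exact ltT_add hlt δ h2

lemma isLM_X_mul (hlt : GoodOrder lt) {g : MvPolynomial (Option (Fin n)) K}
    {mg : Option (Fin n) →₀ ℕ} (h : IsLM (ltT lt) g mg) :
    IsLM (ltT lt) (X none * g) (Finsupp.single none 1 + mg) := by
  rw [X_none_eq]
  exact isLM_monomial_mul hlt one_ne_zero h

end Mul

section Msr
variable {n : ℕ} {lt : (Fin n →₀ ℕ) → (Fin n →₀ ℕ) → Prop}

noncomputable def bnd (n p : ℕ) : Option (Fin n) →₀ ℕ :=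
  Finsupp.equivFunOnFinite.symm fun _ => p

open Classical in
noncomputable def msr (lt : (Fin n →₀ ℕ) → (Fin n →₀ ℕ) → Prop) (p : ℕ)
    (m : Option (Fin n) →₀ ℕ) : ℕ :=
  ((Finset.Iic (bnd n p)).filter fun M => M = m ∨ ltT lt M m).card

lemma le_bnd {p : ℕ} {M : Option (Fin n) →₀ ℕ} (h : mdeg M = p) : M ≤ bnd n p := by
  intro o
  have := Finsupp.le_degree o M
  rw [← mdeg_eq_degree] at this
  simpa [bnd] using le_trans this (le_of_eq h)

lemma msr_lt (hlt : GoodOrder lt) {p : ℕ} {m m' : Option (Fin n) →₀ ℕ}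
    (hm : mdeg m = p) (hm' : mdeg m' = p) (h : ltT lt m' m) : msr lt p m' < msr lt p m := by
  classical
  apply Finset.card_lt_card
  rw [Finset.ssubset_iff_of_subset]
  · refine ⟨m, ?_, ?_⟩
    · simp only [Finset.mem_filter, Finset.mem_Iic]
      exact ⟨le_bnd hm, by tauto⟩
    · simp only [Finset.mem_filter, Finset.mem_Iic, not_and, not_or]
      intro _
      constructor
      · rintro rfl; exact ltT_irrefl hlt _ h
      · exact fun h' => ltT_asymm hlt h h'
  · intro M hM
    simp only [Finset.mem_filter, Finset.mem_Iic] at hM ⊢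
    refine ⟨hM.1, Or.inr ?_⟩
    rcases hM.2 with rfl | h'
    · exact h
    · exact ltT_trans hlt h' h

end Msr
end Stmt12Aux
namespace Stmt12Aux
open MvPolynomial Finsupp

section Main
variable {K : Type*} [Field K] {n : ℕ} {lt : (Fin n →₀ ℕ) → (Fin n →₀ ℕ) → Prop}

lemma lm_none_zero (hlt : GoodOrder lt) {g : MvPolynomial (Option (Fin n)) K}
    (hdh : hmz (deh g) = g) (h0 : g ≠ 0) {mg} (hmg : IsLM (ltT lt) g mg) : mg none = 0 := by
  set f := deh g with hf
  have hfne : f ≠ 0 := by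
    intro h; rw [h, hmz_zero] at hdh; exact h0 hdh.symm
  have hmem : mg ∈ (hmz f).support := by rw [hdh]; exact hmg.1
  obtain ⟨e, he, hMe⟩ := supp_hmz hmem
  by_cases hdeg : mdeg e = f.totalDegree
  · rw [hMe, emb_none]; omega
  · exfalso
    obtain ⟨e', he', hde'⟩ := Finset.exists_mem_eq_sup f.support
      ((MvPolynomial.support_nonempty (p := f)).mpr hfne) mdeg
    rw [totalDegree_eq_sup_mdeg] at hdeg
    have hle : mdeg e ≤ f.support.sup mdeg := Finset.le_sup he
    have hlt1 : mdeg e < mdeg e' := by omega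
    have hee : e ≠ e' := fun h => by rw [h] at hlt1; omega
    have hE : emb f.totalDegree e' ∈ (hmz f).support := by
      rw [MvPolynomial.mem_support_iff, coeff_hmz]
      exact MvPolynomial.mem_support_iff.mp he'
    have hne : emb f.totalDegree e' ≠ mg := by
      rw [hMe]; intro h; exact hee (emb_inj _ h).symm
    have hlt2 : ltT lt (emb f.totalDegree e') mg := hmg.2 _ (by rw [← hdh]; exact hE) hne
    have hlm : lt e e' := hlt.2.2.2.1 _ _ hlt1
    rcases hlt2 with h | ⟨hx, -⟩
    · rw [hMe, xpart_emb, xpart_emb] at h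
      exact hlt.2.1 _ _ hlm h
    · rw [hMe, xpart_emb, xpart_emb] at hx
      exact hee hx.symm

lemma homog_t_cancel (hlt : GoodOrder lt) {J : Ideal (MvPolynomial (Option (Fin n)) K)}
    {G : Set (MvPolynomial (Option (Fin n)) K)}
    (hhom : ∀ g ∈ G, ∃ p : ℕ, MvPolynomial.IsHomogeneous g p)
    (hGB : IsGB (ltT lt) G (J : Set (MvPolynomial (Option (Fin n)) K)))
    (hG : ∀ g ∈ G, hmz (deh g) = g) :
    ∀ N p (F : MvPolynomial (Option (Fin n)) K), F.IsHomogeneous p → F ≠ 0 →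
      (∀ m, IsLM (ltT lt) F m → msr lt p m ≤ N) →
      X none * F ∈ J → F ∈ J := by
  intro N
  induction N using Nat.strong_induction_on with
  | _ N ih =>
    intro p F hFh hF0 hmsr htF
    obtain ⟨m, hm⟩ := exists_isLM (r := ltT lt) (fun a b h => ltT_trichot hlt h)
      (fun a b c h h' => ltT_trans hlt h h') hF0
    have htF0 : X (none : Option (Fin n)) * F ≠ 0 :=
      mul_ne_zero (MvPolynomial.X_ne_zero _) hF0
    have hLMtF : IsLM (ltT lt) (X none * F) (Finsupp.single none 1 + m) := isLM_X_mul hlt hm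
    obtain ⟨g, hgG, mf, mg, hmf, hmg, hdvd⟩ := hGB.2 _ htF htF0
    have hmfe : mf = Finsupp.single none 1 + m := isLM_unique (fun a b h => ltT_asymm hlt h)
      hmf hLMtF
    subst hmfe
    have hg0 : g ≠ 0 := by
      intro h; rw [h] at hmg; simpa using hmg.1
    have hmgnone : mg none = 0 := lm_none_zero hlt (hG g hgG) hg0 hmg
    have hdvd' : monDvd mg m := by
      rw [monDvd_iff] at hdvd ⊢
      intro o
      have h1 := hdvd o
      cases o with
      | none => rw [hmgnone]; omega
      | some i =>
        simpa [Finsupp.single_apply] using h1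
    obtain ⟨δ, hδ⟩ := hdvd'
    have hcg : coeff mg g ≠ 0 := MvPolynomial.mem_support_iff.mp hmg.1
    have hcF : coeff m F ≠ 0 := MvPolynomial.mem_support_iff.mp hm.1
    set c : K := coeff m F * (coeff mg g)⁻¹ with hcdef
    have hc : c ≠ 0 := mul_ne_zero hcF (inv_ne_zero hcg)
    set F' := F - monomial δ c * g with hF'
    have hδm : m = δ + mg := by rw [hδ, add_comm]
    have hcm : coeff m F' = 0 := by
      rw [hF', coeff_sub, hδm, coeff_monomial_mul_add, hcdef,
        mul_assoc, inv_mul_cancel₀ hcg, mul_one, ← hδm, sub_self]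
    have hsup : ∀ M ∈ F'.support, ltT lt M m := by
      intro M hMs
      have hMne : M ≠ m := by
        intro h; rw [h] at hMs; exact MvPolynomial.mem_support_iff.mp hMs hcm
      have hMc : coeff M F' ≠ 0 := MvPolynomial.mem_support_iff.mp hMs
      rw [hF', coeff_sub] at hMc
      by_cases h1 : coeff M F ≠ 0
      · exact hm.2 M (MvPolynomial.mem_support_iff.mpr h1) hMne
      · have h2 : M ∈ (monomial δ c * g).support := by
          rw [MvPolynomial.mem_support_iff]
          intro h; rw [h] at hMc; push_neg at h1; rw [h1] at hMc; simp at hMc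
        rw [supp_monomial_mul hc] at h2
        obtain ⟨d, hd, rfl⟩ := h2
        have hdne : d ≠ mg := by
          intro h; rw [h] at hMne; exact hMne hδm.symm
        have := hmg.2 d hd hdne
        rw [hδm, add_comm δ mg, add_comm δ d]
        exact ltT_add hlt δ this
    have hmul : monomial δ c * g ∈ J := J.mul_mem_left _ (hGB.1 hgG)
    by_cases hF'0 : F' = 0
    · have hFeq : F = monomial δ c * g := by
        rw [hF'] at hF'0; linear_combination hF'0
      rw [hFeq]; exact hmul
    · obtain ⟨m₂, hm₂⟩ := exists_isLM (r := ltT lt) (fun a b h => ltT_trichot hlt h)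
        (fun a b c h h' => ltT_trans hlt h h') hF'0
      have hm₂lt : ltT lt m₂ m := hsup _ hm₂.1
      obtain ⟨q, hq⟩ := hhom g hgG
      have hmgq : mdeg mg = q := homog_mdeg hq hmg.1
      have hmp : mdeg m = p := homog_mdeg hFh hm.1
      have hδdeg : mdeg δ + q = p := by
        rw [hδm, mdeg_add] at hmp; omega
      have hmonh : (monomial δ c * g).IsHomogeneous p := by
        rw [← hδdeg]
        exact (isHomogeneous_monomial c (mdeg_eq_degree δ ▸ rfl)).mul hq
      have hF'h : F'.IsHomogeneous p := hFh.sub hmonh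
      have hmsr₂ : msr lt p m₂ < msr lt p m :=
        msr_lt hlt hmp (homog_mdeg hF'h hm₂.1) hm₂lt
      have hNle : msr lt p m ≤ N := hmsr m hm
      have htF' : X (none : Option (Fin n)) * F' ∈ J := by
        rw [hF', mul_sub]
        exact J.sub_mem htF (J.mul_mem_left _ hmul)
      have hF'J : F' ∈ J := ih (msr lt p m₂) (lt_of_lt_of_le hmsr₂ hNle) p F' hF'h hF'0
        (fun m' hm' => le_of_eq (by rw [isLM_unique (fun a b h => ltT_asymm hlt h) hm' hm₂]))
        htF'
      have hFeq : F = F' + monomial δ c * g := by rw [hF']; ring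
      rw [hFeq]; exact J.add_mem hF'J hmul

lemma t_cancel (hlt : GoodOrder lt) {J : Ideal (MvPolynomial (Option (Fin n)) K)}
    (hJ : GradedIdeal J) {G : Set (MvPolynomial (Option (Fin n)) K)}
    (hhom : ∀ g ∈ G, ∃ p : ℕ, MvPolynomial.IsHomogeneous g p)
    (hGB : IsGB (ltT lt) G (J : Set (MvPolynomial (Option (Fin n)) K)))
    (hG : ∀ g ∈ G, hmz (deh g) = g) :
    ∀ F : MvPolynomial (Option (Fin n)) K, X none * F ∈ J → F ∈ J := by
  intro F htF
  have hcomp : ∀ q, homogeneousComponent q F ∈ J := by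
    intro q
    have h1 : X (none : Option (Fin n)) * homogeneousComponent q F ∈ J := by
      rw [← comp_t_mul]
      exact hJ _ htF _
    by_cases h0 : homogeneousComponent q F = 0
    · rw [h0]; exact J.zero_mem
    · obtain ⟨m₀, hm₀⟩ := exists_isLM (r := ltT lt) (fun a b h => ltT_trichot hlt h)
        (fun a b c h h' => ltT_trans hlt h h') h0
      exact homog_t_cancel hlt hhom hGB hG (msr lt q m₀) q _
        (homogeneousComponent_isHomogeneous q F) h0
        (fun m' hm' => le_of_eq
          (by rw [isLM_unique (fun a b h => ltT_asymm hlt h) hm' hm₀])) h1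
  have hsum : (∑ q ∈ Finset.range (F.totalDegree + 1), homogeneousComponent q F) ∈ J :=
    Ideal.sum_mem J (fun q _ => hcomp q)
  rwa [F.sum_homogeneousComponent] at hsum

end Main
end Stmt12Aux
namespace Stmt12Aux
open MvPolynomial Finsupp

section Span
variable {K : Type*} [Field K] {n : ℕ} {lt : (Fin n →₀ ℕ) → (Fin n →₀ ℕ) → Prop}

lemma deh_eq_dehHom (F : MvPolynomial (Option (Fin n)) K) : deh F = dehHom F := rfl

lemma dehHom_surjective : Function.Surjective (dehHom (K := K) (n := n)) := by
  intro q
  refine ⟨rename Option.some q, ?_⟩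
  show aeval (fun o : Option (Fin n) => o.elim 1 X) (rename Option.some q) = q
  rw [aeval_rename]
  exact aeval_X_left_apply q

lemma dehHom_X_none : (dehHom (K := K) (n := n)) (X none) = 1 := by
  rw [← deh_eq_dehHom]
  show aeval (fun o : Option (Fin n) => o.elim 1 X) (X none) = 1
  rw [aeval_X]
  rfl

lemma deh_zero : deh (0 : MvPolynomial (Option (Fin n)) K) = 0 := by
  rw [deh_eq_dehHom, map_zero]

lemma pow_cancel {J : Ideal (MvPolynomial (Option (Fin n)) K)}
    (hsat : ∀ F, X (none : Option (Fin n)) * F ∈ J → F ∈ J) :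
    ∀ (k : ℕ) (P : MvPolynomial (Option (Fin n)) K),
      X (none : Option (Fin n)) ^ k * P ∈ J → P ∈ J := by
  intro k
  induction k with
  | zero => intro P h; simpa using h
  | succ k ih =>
    intro P h
    have h' : X (none : Option (Fin n)) ^ k * (X none * P) ∈ J := by
      rw [← mul_assoc, ← pow_succ]; exact h
    exact hsat P (ih _ h')

lemma span_eq_of_sat {J : Ideal (MvPolynomial (Option (Fin n)) K)} (hJ : GradedIdeal J)
    (hsat : ∀ F, X (none : Option (Fin n)) * F ∈ J → F ∈ J) :
    Ideal.span (HSet (Ideal.map (dehHom (K := K) (n := n)) J)) = J := by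
  apply le_antisymm
  · rw [Ideal.span_le]
    rintro x ⟨f, hf, hfne, rfl⟩
    obtain ⟨H, hHJ, hHf⟩ := (Ideal.mem_map_iff_of_surjective _ dehHom_surjective).mp hf
    set N := H.totalDegree with hN
    set H' : MvPolynomial (Option (Fin n)) K :=
      ∑ q ∈ Finset.range (N + 1), X none ^ (N - q) * homogeneousComponent q H with hH'
    have hH'J : H' ∈ J := Ideal.sum_mem _ fun q _ => J.mul_mem_left _ (hJ H hHJ q)
    have hH'h : H'.IsHomogeneous N := by
      refine IsHomogeneous.sum _ _ _ fun q hq => ?_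
      have hle : (N - q) + q = N := by rw [Finset.mem_range] at hq; omega
      have hmul := (isHomogeneous_X_pow (none : Option (Fin n)) (N - q)).mul
        (homogeneousComponent_isHomogeneous q H)
      rwa [hle] at hmul
    have hdH' : deh H' = f := by
      rw [deh_eq_dehHom, hH', map_sum]
      have hterm : ∀ q, dehHom (X (none : Option (Fin n)) ^ (N - q) * homogeneousComponent q H)
          = dehHom (homogeneousComponent q H) := by
        intro q
        rw [map_mul, map_pow, dehHom_X_none, one_pow, one_mul]
      simp_rw [hterm]
      rw [← map_sum, H.sum_homogeneousComponent, ← hHf]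
    have hH'0 : H' ≠ 0 := by
      intro h; rw [h, deh_zero] at hdH'; exact hfne hdH'.symm
    have hkey := homog_eq_pow_mul hH'h hH'0
    rw [hdH'] at hkey
    exact pow_cancel hsat _ _ (hkey.symm ▸ hH'J)
  · intro F hFJ
    have hcomp : ∀ q, homogeneousComponent q F
        ∈ Ideal.span (HSet (Ideal.map (dehHom (K := K) (n := n)) J)) := by
      intro q
      have hq : homogeneousComponent q F ∈ J := hJ F hFJ q
      by_cases h0 : homogeneousComponent q F = 0
      · rw [h0]; exact zero_mem _
      · have hh := homogeneousComponent_isHomogeneous q F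
        have hd : deh (homogeneousComponent q F) ∈ Ideal.map (dehHom (K := K) (n := n)) J := by
          rw [deh_eq_dehHom]; exact Ideal.mem_map_of_mem _ hq
        have hkey := homog_eq_pow_mul hh h0
        rw [← hkey]
        exact Ideal.mul_mem_left _ _
          (Ideal.subset_span ⟨_, hd, deh_ne_zero hh h0, rfl⟩)
    have hsum := Ideal.sum_mem _
      (fun q (_ : q ∈ Finset.range (F.totalDegree + 1)) => hcomp q)
    rwa [F.sum_homogeneousComponent] at hsum

lemma sat_of_span {J : Ideal (MvPolynomial (Option (Fin n)) K)} (hJ : GradedIdeal J)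
    (hspan : Ideal.span (HSet (Ideal.map (dehHom (K := K) (n := n)) J)) = J) :
    ∀ F, X (none : Option (Fin n)) * F ∈ J → F ∈ J := by
  have homogCase : ∀ p (F : MvPolynomial (Option (Fin n)) K), F.IsHomogeneous p →
      X none * F ∈ J → F ∈ J := by
    intro p F hFh htF
    by_cases h0 : F = 0
    · rw [h0]; exact J.zero_mem
    · have hd : deh F ∈ Ideal.map (dehHom (K := K) (n := n)) J := by
        have h1 : dehHom (X (none : Option (Fin n)) * F)
            ∈ Ideal.map (dehHom (K := K) (n := n)) J := Ideal.mem_map_of_mem _ htF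
        rw [map_mul, dehHom_X_none, one_mul] at h1
        exact deh_eq_dehHom F ▸ h1
      have hmem : hmz (deh F) ∈ J := by
        rw [← hspan]
        exact Ideal.subset_span ⟨_, hd, deh_ne_zero hFh h0, rfl⟩
      have hkey := homog_eq_pow_mul hFh h0
      rw [← hkey]
      exact J.mul_mem_left _ hmem
  intro F htF
  have hcomp : ∀ q, homogeneousComponent q F ∈ J := fun q =>
    homogCase q _ (homogeneousComponent_isHomogeneous q F)
      (by rw [← comp_t_mul]; exact hJ _ htF _)
  have hsum := Ideal.sum_mem J
    (fun q (_ : q ∈ Finset.range (F.totalDegree + 1)) => hcomp q)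
  rwa [F.sum_homogeneousComponent] at hsum

lemma dh_closed_of_sat (hlt : GoodOrder lt) {J : Ideal (MvPolynomial (Option (Fin n)) K)}
    {G : Set (MvPolynomial (Option (Fin n)) K)}
    (hhom : ∀ g ∈ G, ∃ p : ℕ, MvPolynomial.IsHomogeneous g p)
    (hmin : MinGB (ltT lt) G (J : Set (MvPolynomial (Option (Fin n)) K)))
    (hsat : ∀ F, X (none : Option (Fin n)) * F ∈ J → F ∈ J) :
    ∀ g ∈ G, hmz (deh g) = g := by
  intro g hgG
  by_cases hg0 : g = 0
  · rw [hg0, deh_zero, hmz_zero]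
  obtain ⟨p, hp⟩ := hhom g hgG
  have hf0 : deh g ≠ 0 := deh_ne_zero hp hg0
  set f := deh g with hfdef
  set k := p - f.totalDegree with hk
  have hkey : X (none : Option (Fin n)) ^ k * hmz f = g := homog_eq_pow_mul hp hg0
  have hgJ : g ∈ J := hmin.1.1 hgG
  have hhJ : hmz f ∈ J := pow_cancel hsat k _ (hkey.symm ▸ hgJ)
  have hh0 : hmz f ≠ 0 := hmz_ne_zero hf0
  obtain ⟨g', hg'G, mh, mg', hmh, hmg', hdvd⟩ := hmin.1.2 _ hhJ hh0
  have hLMg : IsLM (ltT lt) g (Finsupp.single none k + mh) := by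
    rw [← hkey, X_pow_eq_monomial]
    exact isLM_monomial_mul hlt one_ne_zero hmh
  by_cases hgg : g' = g
  · subst hgg
    have heq : mg' = Finsupp.single none k + mh :=
      isLM_unique (fun a b h => ltT_asymm hlt h) hmg' hLMg
    rw [heq] at hdvd
    have hmd := monDvd_mdeg hdvd
    rw [mdeg_add, mdeg_single] at hmd
    have hk0 : k = 0 := by omega
    rw [← hkey, hk0, pow_zero, one_mul]
  · exact absurd (monDvd_trans hdvd ⟨_, add_comm _ _⟩)
      (hmin.2 g' hg'G g hgG hgg mg' _ hmg' hLMg)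

end Span
end Stmt12Aux

open Stmt12Aux

theorem stmt12 {K : Type*} [Field K] {n : ℕ}
    (lt : (Fin n →₀ ℕ) → (Fin n →₀ ℕ) → Prop) (hlt : GoodOrder lt)
    (J : Ideal (MvPolynomial (Option (Fin n)) K)) (hJ : GradedIdeal J)
    (G : Set (MvPolynomial (Option (Fin n)) K))
    (hhom : ∀ g ∈ G, ∃ p : ℕ, MvPolynomial.IsHomogeneous g p)
    (hmin : MinGB (ltT lt) G (J : Set (MvPolynomial (Option (Fin n)) K))) :
    ((∀ F ∈ G, hmz (deh F) = F) ↔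
      Ideal.span (HSet (Ideal.map (dehHom (K := K) (n := n)) J)) = J) ∧
    ((Ideal.span (HSet (Ideal.map (dehHom (K := K) (n := n)) J)) = J) ↔
      (∀ F : MvPolynomial (Option (Fin n)) K,
        MvPolynomial.X (none : Option (Fin n)) * F ∈ J → F ∈ J)) ∧
    ((∀ F : MvPolynomial (Option (Fin n)) K,
        MvPolynomial.X (none : Option (Fin n)) * F ∈ J → F ∈ J) ↔
      (∀ F : MvPolynomial (Option (Fin n)) K,
        F ∈ Ideal.span {MvPolynomial.X (none : Option (Fin n))} ⊓ J ↔
          ∃ H ∈ J, F = MvPolynomial.X (none : Option (Fin n)) * H)) := by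
  classical
  have hGB : IsGB (ltT lt) G (J : Set (MvPolynomial (Option (Fin n)) K)) := hmin.1
  have h12 : (∀ F ∈ G, hmz (deh F) = F) →
      Ideal.span (HSet (Ideal.map (dehHom (K := K) (n := n)) J)) = J :=
    fun hi => span_eq_of_sat hJ (t_cancel hlt hJ hhom hGB hi)
  have h21 : Ideal.span (HSet (Ideal.map (dehHom (K := K) (n := n)) J)) = J →
      (∀ F ∈ G, hmz (deh F) = F) :=
    fun hs => dh_closed_of_sat hlt hhom hmin (sat_of_span hJ hs)
  refine ⟨⟨h12, h21⟩, ⟨fun hs => sat_of_span hJ hs, fun hs => span_eq_of_sat hJ hs⟩, ?_, ?_⟩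
  · intro hsat F
    constructor
    · intro hF
      obtain ⟨h1, h2⟩ := Submodule.mem_inf.mp hF
      obtain ⟨H, rfl⟩ := Ideal.mem_span_singleton.mp h1
      exact ⟨H, hsat H h2, rfl⟩
    · rintro ⟨H, hH, rfl⟩
      exact Submodule.mem_inf.mpr
        ⟨Ideal.mem_span_singleton.mpr (Dvd.intro H rfl), J.mul_mem_left _ hH⟩
  · intro hiv F htF
    have hmem : MvPolynomial.X (none : Option (Fin n)) * F
        ∈ Ideal.span {MvPolynomial.X (none : Option (Fin n))} ⊓ J :=
      Submodule.mem_inf.mpr ⟨Ideal.mem_span_singleton.mpr (Dvd.intro F rfl), htF⟩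
    obtain ⟨H, hH, heq⟩ := (hiv _).mp hmem
    have hFH : F = H := mul_left_cancel₀ (MvPolynomial.X_ne_zero _) heq
    rwa [hFH]
end

section
/- Let 𝒞 be the two-sided ideal of K⟨X₁,…,Xₙ,T⟩ generated by {XᵢT − TXᵢ : 1 ≤ i ≤ n}. Every homogeneous element F ∈ K⟨X₁,…,Xₙ,T⟩ of degree p can be written uniquely as F = L + H where L ∈ 𝒞 and H = Σᵢ λᵢ T^{rᵢ} wᵢ is a homogeneous K-linear combination of words of the form T^r·w with w a word in X₁,…,Xₙ; moreover there is r ∈ ℕ with T^r (H∼)~ = H, where ∼ is the substitution T ↦ 1 and ~ denotes noncentral homogenization. -/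
abbrev Wrd (n : ℕ) := FreeMonoid (Option (Fin n))
abbrev WrdX (n : ℕ) := FreeMonoid (Fin n)
abbrev FA (K : Type*) [Field K] (n : ℕ) := MonoidAlgebra K (Wrd n)
abbrev FAX (K : Type*) [Field K] (n : ℕ) := MonoidAlgebra K (WrdX n)

def ltLetter {n : ℕ} : Option (Fin n) → Option (Fin n) → Prop
  | none, some _ => True
  | some i, some j => i < j
  | _, _ => False

def wlen {n : ℕ} (m : Wrd n) : ℕ := (FreeMonoid.toList m).length
def xlen {n : ℕ} (m : WrdX n) : ℕ := (FreeMonoid.toList m).length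

def ltW {n : ℕ} (a b : Wrd n) : Prop :=
  wlen a < wlen b ∨
    (wlen a = wlen b ∧ List.Lex ltLetter (FreeMonoid.toList a) (FreeMonoid.toList b))

def ltWX {n : ℕ} (a b : WrdX n) : Prop :=
  xlen a < xlen b ∨
    (xlen a = xlen b ∧ List.Lex (· < ·) (FreeMonoid.toList a) (FreeMonoid.toList b))

def IsLMnc {K M : Type*} [Field K] [Monoid M] (lt : M → M → Prop)
    (f : MonoidAlgebra K M) (m : M) : Prop :=
  m ∈ f.coeff.support ∧ ∀ m' ∈ f.coeff.support, m' ≠ m → lt m' m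

def subword {M : Type*} [Monoid M] (u v : M) : Prop := ∃ l r, v = l * u * r

def IsGBnc {K M : Type*} [Field K] [Monoid M] (lt : M → M → Prop)
    (G Jset : Set (MonoidAlgebra K M)) : Prop :=
  G ⊆ Jset ∧ ∀ f ∈ Jset, f ≠ 0 →
    ∃ g ∈ G, ∃ mf mg, IsLMnc lt f mf ∧ IsLMnc lt g mg ∧ subword mg mf

noncomputable def TT (K : Type*) [Field K] (n : ℕ) : FA K n :=
  MonoidAlgebra.single (FreeMonoid.of (none : Option (Fin n))) 1

noncomputable def XX (K : Type*) [Field K] {n : ℕ} (i : Fin n) : FA K n :=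
  MonoidAlgebra.single (FreeMonoid.of (some i)) 1

def Srel (K : Type*) [Field K] (n : ℕ) : Set (FA K n) :=
  {F | ∃ i : Fin n, F = XX K i * TT K n - TT K n * XX K i}

def IsHomogW {K : Type*} [Field K] {n : ℕ} (f : FA K n) (p : ℕ) : Prop :=
  ∀ m ∈ f.coeff.support, wlen m = p

def IsHomogX {K : Type*} [Field K] {n : ℕ} (f : FAX K n) (p : ℕ) : Prop :=
  ∀ m ∈ f.coeff.support, xlen m = p

noncomputable def dehF {K : Type*} [Field K] {n : ℕ} (F : FA K n) : FAX K n :=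
  MonoidAlgebra.ofCoeff
    (Finsupp.mapDomain (FreeMonoid.lift fun o : Option (Fin n) => o.elim 1 FreeMonoid.of) F.coeff)

def degX {K : Type*} [Field K] {n : ℕ} (f : FAX K n) : ℕ := f.coeff.support.sup xlen

noncomputable def homF {K : Type*} [Field K] {n : ℕ} (f : FAX K n) : FA K n :=
  f.coeff.support.sum fun w => MonoidAlgebra.single
    ((FreeMonoid.of (none : Option (Fin n))) ^ (degX f - xlen w) * FreeMonoid.map some w) (f.coeff w)

def Tword {n : ℕ} (M : Wrd n) : Prop :=
  ∃ (r : ℕ) (w : WrdX n),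
    M = (FreeMonoid.of (none : Option (Fin n))) ^ r * FreeMonoid.map some w

noncomputable def homogComponentW {K : Type*} [Field K] {n : ℕ} (p : ℕ) (F : FA K n) :
    FA K n :=
  MonoidAlgebra.ofCoeff (Finsupp.filter (fun M : Wrd n => wlen M = p) F.coeff)



namespace Stmt16Aux

open MonoidAlgebra Finsupp

variable {K : Type*} [Field K] {n : ℕ}

/-- erase the `T`s (`none` letters) from a word -/
def del {n : ℕ} : Wrd n →* WrdX n :=
  FreeMonoid.lift fun o : Option (Fin n) => o.elim 1 FreeMonoid.of

@[simp] lemma del_of_none : del (FreeMonoid.of (none : Option (Fin n))) = 1 := rfl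
@[simp] lemma del_of_some (i : Fin n) :
    del (FreeMonoid.of (some i : Option (Fin n))) = FreeMonoid.of i := rfl

@[simp] lemma del_map_some (w : WrdX n) : del (FreeMonoid.map some w) = w := by
  induction w using FreeMonoid.inductionOn' with
  | one => simp
  | of_mul a w ih => rw [map_mul, map_mul, FreeMonoid.map_of, del_of_some, ih]

@[simp] lemma wlen_one : wlen (1 : Wrd n) = 0 := rfl
@[simp] lemma wlen_mul (a b : Wrd n) : wlen (a * b) = wlen a + wlen b :=
  List.length_append
@[simp] lemma wlen_of (a : Option (Fin n)) : wlen (FreeMonoid.of a) = 1 := rfl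
@[simp] lemma xlen_one : xlen (1 : WrdX n) = 0 := rfl
@[simp] lemma xlen_mul (a b : WrdX n) : xlen (a * b) = xlen a + xlen b :=
  List.length_append
@[simp] lemma xlen_of (a : Fin n) : xlen (FreeMonoid.of a) = 1 := rfl

@[simp] lemma wlen_Tpow (r : ℕ) :
    wlen ((FreeMonoid.of (none : Option (Fin n))) ^ r) = r := by
  induction r with
  | zero => simp
  | succ r ih => rw [pow_succ, wlen_mul, ih, wlen_of]

@[simp] lemma wlen_map_some (w : WrdX n) : wlen (FreeMonoid.map some w) = xlen w := by
  induction w using FreeMonoid.inductionOn' with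
  | one => simp [map_one]
  | of_mul a w ih => rw [map_mul, FreeMonoid.map_of, wlen_mul, xlen_mul, ih, wlen_of, xlen_of]

lemma xlen_del_le (M : Wrd n) : xlen (del M) ≤ wlen M := by
  induction M using FreeMonoid.inductionOn' with
  | one => simp
  | of_mul a M ih =>
    rw [map_mul, wlen_mul, xlen_mul]
    cases a <;> simp <;> omega

/-- the normal form of a word: all `T`s moved to the front -/
def norm {n : ℕ} (M : Wrd n) : Wrd n :=
  (FreeMonoid.of (none : Option (Fin n))) ^ (wlen M - xlen (del M)) *
    FreeMonoid.map some (del M)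

lemma Tword_norm (M : Wrd n) : Tword (norm M) := ⟨_, _, rfl⟩

lemma wlen_norm (M : Wrd n) : wlen (norm M) = wlen M := by
  have := xlen_del_le M
  rw [norm, wlen_mul, wlen_Tpow, wlen_map_some]; omega

lemma del_norm (M : Wrd n) : del (norm M) = del M := by
  rw [norm, map_mul, map_pow, del_of_none, one_pow, one_mul, del_map_some]

lemma comm_pow (i : Fin n) (r : ℕ) :
    XX K i * TT K n ^ r - TT K n ^ r * XX K i ∈ TwoSidedIdeal.span (Srel K n) := by
  induction r with
  | zero => simpa using (TwoSidedIdeal.span (Srel K n)).zero_mem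
  | succ r ih =>
    have hbase : XX K i * TT K n - TT K n * XX K i ∈ TwoSidedIdeal.span (Srel K n) :=
      TwoSidedIdeal.subset_span ⟨i, rfl⟩
    have h1 := (TwoSidedIdeal.span (Srel K n)).mul_mem_right _ (TT K n ^ r) hbase
    have h2 := (TwoSidedIdeal.span (Srel K n)).mul_mem_left (TT K n) _ ih
    have := (TwoSidedIdeal.span (Srel K n)).add_mem h1 h2
    convert this using 1
    rw [pow_succ']
    noncomm_ring

lemma single_norm_mem (M : Wrd n) :
    MonoidAlgebra.single M (1 : K) - MonoidAlgebra.single (norm M) 1 ∈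
      TwoSidedIdeal.span (Srel K n) := by
  induction M using FreeMonoid.inductionOn' with
  | one =>
    have : norm (1 : Wrd n) = 1 := by simp [norm, map_one]
    rw [this, sub_self]; exact (TwoSidedIdeal.span (Srel K n)).zero_mem
  | of_mul a M ih =>
    set I := TwoSidedIdeal.span (Srel K n)
    cases a with
    | none =>
      have hn : norm (FreeMonoid.of (none : Option (Fin n)) * M) =
          FreeMonoid.of (none : Option (Fin n)) * norm M := by
        have := xlen_del_le M
        rw [norm, norm, map_mul, del_of_none, one_mul, wlen_mul, wlen_of]
        rw [show 1 + wlen M - xlen (del M) = (wlen M - xlen (del M)) + 1 by omega]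
        rw [pow_succ', mul_assoc]
      have h := I.mul_mem_left (TT K n) _ ih
      rw [mul_sub] at h
      have e : ∀ N : Wrd n, TT K n * MonoidAlgebra.single N (1 : K) =
          MonoidAlgebra.single (FreeMonoid.of (none : Option (Fin n)) * N) 1 := by
        intro N; rw [TT, MonoidAlgebra.single_mul_single, one_mul]
      rw [e, e] at h
      rwa [hn]
    | some i =>
      have hd : norm (FreeMonoid.of (some i : Option (Fin n)) * M) =
          (FreeMonoid.of (none : Option (Fin n))) ^ (wlen M - xlen (del M)) *
            (FreeMonoid.of (some i : Option (Fin n)) * FreeMonoid.map some (del M)) := by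
        rw [norm, map_mul, del_of_some, wlen_mul, wlen_of, xlen_mul, xlen_of]
        rw [show 1 + wlen M - (1 + xlen (del M)) = wlen M - xlen (del M) by omega]
        rw [map_mul, FreeMonoid.map_of]
      set r := wlen M - xlen (del M) with hr
      set w' := FreeMonoid.map some (del M) with hw'
      have h1 := I.mul_mem_left (XX K i) _ ih
      rw [mul_sub] at h1
      have eX : ∀ N : Wrd n, XX K i * MonoidAlgebra.single N (1 : K) =
          MonoidAlgebra.single (FreeMonoid.of (some i : Option (Fin n)) * N) 1 := by
        intro N; rw [XX, MonoidAlgebra.single_mul_single, one_mul]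
      rw [eX, eX] at h1
      have h2 := I.mul_mem_right _ (MonoidAlgebra.single w' (1 : K)) (comm_pow i r)
      rw [sub_mul] at h2
      have eT : TT K n ^ r = MonoidAlgebra.single
          ((FreeMonoid.of (none : Option (Fin n))) ^ r) (1 : K) := by
        rw [TT, MonoidAlgebra.single_pow, one_pow]
      simp only [eT, XX, MonoidAlgebra.single_mul_single, one_mul] at h2
      have := I.add_mem h1 h2
      rw [hd]
      convert this using 1
      rw [norm, ← hr, ← hw', mul_assoc, mul_assoc]
      abel

noncomputable def normF {K : Type*} [Field K] {n : ℕ} (F : FA K n) : FA K n :=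
  MonoidAlgebra.ofCoeff (Finsupp.mapDomain norm F.coeff)

lemma sub_normF_mem (F : FA K n) :
    F - normF F ∈ TwoSidedIdeal.span (Srel K n) := by
  have hF : F = F.coeff.sum (fun a b => MonoidAlgebra.single a b) :=
    (MonoidAlgebra.sum_coeff_single F).symm
  have hN : normF F = F.coeff.sum (fun a b => MonoidAlgebra.single (norm a) b) := by
    rw [normF, Finsupp.mapDomain, MonoidAlgebra.ofCoeff_finsuppSum]; rfl
  rw [hN]
  nth_rewrite 1 [hF]
  rw [← Finsupp.sum_sub]
  refine sum_mem fun a _ => ?_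
  have h := (TwoSidedIdeal.span (Srel K n)).mul_mem_left
    (MonoidAlgebra.single (1 : Wrd n) (F.coeff a)) _ (single_norm_mem (K := K) a)
  simp only [mul_sub, MonoidAlgebra.single_mul_single, one_mul, mul_one] at h
  exact h

/-- abelianized reading of a word: (number of `T`s, the `X`-word) -/
def nu {n : ℕ} : Wrd n →* Multiplicative ℕ × WrdX n :=
  FreeMonoid.lift fun o : Option (Fin n) =>
    o.elim (Multiplicative.ofAdd 1, 1) fun i => (1, FreeMonoid.of i)

@[simp] lemma nu_of_none :
    nu (FreeMonoid.of (none : Option (Fin n))) = (Multiplicative.ofAdd 1, 1) := rfl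
@[simp] lemma nu_of_some (i : Fin n) :
    nu (FreeMonoid.of (some i : Option (Fin n))) = (1, FreeMonoid.of i) := rfl

lemma nu_Tpow (r : ℕ) :
    nu ((FreeMonoid.of (none : Option (Fin n))) ^ r) = (Multiplicative.ofAdd r, 1) := by
  induction r with
  | zero => rfl
  | succ r ih =>
    rw [pow_succ, map_mul, ih, nu_of_none, Prod.mk_mul_mk, mul_one]
    congr 1

lemma nu_map_some (w : WrdX n) : nu (FreeMonoid.map some w) = (1, w) := by
  induction w using FreeMonoid.inductionOn' with
  | one => simp [map_one]; rfl
  | of_mul a w ih =>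
    rw [map_mul, map_mul, FreeMonoid.map_of, nu_of_some, ih, Prod.mk_mul_mk, one_mul]

lemma nu_Tword (r : ℕ) (w : WrdX n) :
    nu ((FreeMonoid.of (none : Option (Fin n))) ^ r * FreeMonoid.map some w) =
      (Multiplicative.ofAdd r, w) := by
  rw [map_mul, nu_Tpow, nu_map_some, Prod.mk_mul_mk, mul_one, one_mul]

lemma nu_injOn : Set.InjOn (nu (n := n)) {M : Wrd n | Tword M} := by
  rintro M ⟨r, w, rfl⟩ M' ⟨r', w', rfl⟩ h
  rw [nu_Tword, nu_Tword, Prod.mk.injEq] at h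
  obtain ⟨h1, h2⟩ := h
  have : r = r' := by simpa using congrArg Multiplicative.toAdd h1
  rw [this, h2]

noncomputable def phi (K : Type*) [Field K] (n : ℕ) :
    FA K n →+* MonoidAlgebra K (Multiplicative ℕ × WrdX n) :=
  MonoidAlgebra.mapDomainRingHom K (nu (n := n))

lemma phi_single (M : Wrd n) (c : K) :
    phi K n (MonoidAlgebra.single M c) = MonoidAlgebra.single (nu M) c := by
  simp [phi, MonoidAlgebra.mapDomainRingHom, Finsupp.mapDomain_single]

lemma phi_apply (H : FA K n) : phi K n H = MonoidAlgebra.mapDomain (nu (n := n)) H := rfl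

lemma span_le_ker {x : FA K n} (hx : x ∈ TwoSidedIdeal.span (Srel K n)) :
    phi K n x = 0 := by
  have : x ∈ TwoSidedIdeal.ker (phi K n) := by
    refine TwoSidedIdeal.mem_span_iff.1 hx _ ?_
    rintro y ⟨i, rfl⟩
    rw [SetLike.mem_coe, TwoSidedIdeal.mem_ker, map_sub, map_mul, map_mul,
      XX, TT, phi_single, phi_single, MonoidAlgebra.single_mul_single,
      MonoidAlgebra.single_mul_single, nu_of_some, nu_of_none,
      Prod.mk_mul_mk, Prod.mk_mul_mk]
    simp
  exact (TwoSidedIdeal.mem_ker _).1 this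

lemma tword_unique {H H' : FA K n} (hH : ∀ M ∈ H.coeff.support, Tword M)
    (hH' : ∀ M ∈ H'.coeff.support, Tword M)
    (h : H - H' ∈ TwoSidedIdeal.span (Srel K n)) : H = H' := by
  have hphi : phi K n H = phi K n H' := by
    have := span_le_ker h
    rw [map_sub, sub_eq_zero] at this
    exact this
  exact MonoidAlgebra.coeff_injective (Finsupp.mapDomain_injOn {M : Wrd n | Tword M} nu_injOn
    (fun M hM => hH M hM) (fun M hM => hH' M hM) (congrArg MonoidAlgebra.coeff hphi))

lemma del_Tpow (r : ℕ) : del ((FreeMonoid.of (none : Option (Fin n))) ^ r) = 1 := by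
  rw [map_pow, del_of_none, one_pow]

lemma homF_eq (H : FA K n) (p : ℕ) (hT : ∀ M ∈ H.coeff.support, Tword M)
    (hhom : IsHomogW H p) :
    MonoidAlgebra.single
      ((FreeMonoid.of (none : Option (Fin n))) ^ (p - degX (dehF H))) (1 : K) *
      homF (dehF H) = H := by
  classical
  have hdehF : (dehF H).coeff = Finsupp.mapDomain (del (n := n)) H.coeff := rfl
  have hM : ∀ M ∈ H.coeff.support, xlen (del M) ≤ p ∧
      M = (FreeMonoid.of (none : Option (Fin n))) ^ (p - xlen (del M)) *
        FreeMonoid.map Option.some (del M) := by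
    intro M hMs
    obtain ⟨r, w, rfl⟩ := hT M hMs
    have hlen : r + xlen w = p := by
      have := hhom _ hMs
      rwa [wlen_mul, wlen_Tpow, wlen_map_some] at this
    have hdel : del ((FreeMonoid.of (none : Option (Fin n))) ^ r *
        FreeMonoid.map Option.some w) = w := by
      rw [map_mul, del_Tpow, one_mul, del_map_some]
    rw [hdel]
    constructor
    · omega
    · have hrw : r = p - xlen w := by omega
      rw [hrw]
  have hinj : Set.InjOn (del (n := n)) ↑H.coeff.support := by
    intro M hMs M' hMs' h
    rw [(hM M hMs).2, (hM M' hMs').2, h]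
  have hsupp : (dehF H).coeff.support = H.coeff.support.image del :=
    hdehF ▸ Finsupp.mapDomain_support_of_injOn H.coeff hinj
  have happ : ∀ M ∈ H.coeff.support, (dehF H).coeff (del M) = H.coeff M := by
    intro M hMs
    rw [hdehF]
    exact Finsupp.mapDomain_apply' ↑H.coeff.support H.coeff subset_rfl hinj hMs
  have hdeg_le : degX (dehF H) ≤ p := by
    refine Finset.sup_le fun w hw => ?_
    rw [hsupp] at hw
    obtain ⟨M, hMs, rfl⟩ := Finset.mem_image.1 hw
    exact (hM M hMs).1
  have hdeg_ge : ∀ M ∈ H.coeff.support, xlen (del M) ≤ degX (dehF H) := by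
    intro M hMs
    exact Finset.le_sup (by rw [hsupp]; exact Finset.mem_image_of_mem _ hMs)
  rw [homF, Finset.mul_sum]
  have : ∀ w ∈ (dehF H).coeff.support,
      MonoidAlgebra.single
        ((FreeMonoid.of (none : Option (Fin n))) ^ (p - degX (dehF H))) (1 : K) *
        MonoidAlgebra.single
          ((FreeMonoid.of (none : Option (Fin n))) ^ (degX (dehF H) - xlen w) *
            FreeMonoid.map Option.some w) ((dehF H).coeff w) =
      MonoidAlgebra.single
        ((FreeMonoid.of (none : Option (Fin n))) ^ (p - xlen w) *
          FreeMonoid.map Option.some w) ((dehF H).coeff w) := by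
    intro w hw
    have hwle : xlen w ≤ degX (dehF H) := Finset.le_sup hw
    rw [MonoidAlgebra.single_mul_single, one_mul, ← mul_assoc, ← pow_add]
    congr 3
    omega
  rw [Finset.sum_congr rfl this, hsupp, Finset.sum_image hinj]
  have : ∀ M ∈ H.coeff.support,
      MonoidAlgebra.single
        ((FreeMonoid.of (none : Option (Fin n))) ^ (p - xlen (del M)) *
          FreeMonoid.map Option.some (del M)) ((dehF H).coeff (del M)) =
      MonoidAlgebra.single M (H.coeff M) := by
    intro M hMs
    rw [happ M hMs, ← (hM M hMs).2]
  rw [Finset.sum_congr rfl this]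
  exact MonoidAlgebra.sum_coeff_single H

end Stmt16Aux


open Stmt16Aux in
theorem stmt16 {K : Type*} [Field K] {n : ℕ} (F : FA K n) (p : ℕ)
    (hF : IsHomogW F p) :
    ∃ H : FA K n,
      (F - H ∈ (TwoSidedIdeal.span (Srel K n) : TwoSidedIdeal (FA K n))) ∧
      (∀ M ∈ H.coeff.support, Tword M) ∧
      IsHomogW H p ∧
      (∃ r : ℕ, MonoidAlgebra.single
          ((FreeMonoid.of (none : Option (Fin n))) ^ r) (1 : K) * homF (dehF H) = H) ∧
      ∀ H' : FA K n,
        (F - H' ∈ (TwoSidedIdeal.span (Srel K n) : TwoSidedIdeal (FA K n))) →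
        (∀ M ∈ H'.coeff.support, Tword M) → H' = H := by
  classical
  refine ⟨normF F, sub_normF_mem F, ?_, ?_, ?_, ?_⟩
  · intro M hMs
    have := Finsupp.mapDomain_support (f := norm (n := n)) (s := F.coeff) hMs
    obtain ⟨M₀, _, rfl⟩ := Finset.mem_image.1 this
    exact Tword_norm M₀
  · intro M hMs
    have := Finsupp.mapDomain_support (f := norm (n := n)) (s := F.coeff) hMs
    obtain ⟨M₀, hM₀, rfl⟩ := Finset.mem_image.1 this
    rw [wlen_norm]
    exact hF M₀ hM₀
  · refine ⟨p - degX (dehF (normF F)), homF_eq (normF F) p ?_ ?_⟩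
    · intro M hMs
      have := Finsupp.mapDomain_support (f := norm (n := n)) (s := F.coeff) hMs
      obtain ⟨M₀, _, rfl⟩ := Finset.mem_image.1 this
      exact Tword_norm M₀
    · intro M hMs
      have := Finsupp.mapDomain_support (f := norm (n := n)) (s := F.coeff) hMs
      obtain ⟨M₀, hM₀, rfl⟩ := Finset.mem_image.1 this
      rw [wlen_norm]
      exact hF M₀ hM₀
  · intro H' hmem hT'
    refine tword_unique hT' ?_ ?_
    · intro M hMs
      have := Finsupp.mapDomain_support (f := norm (n := n)) (s := F.coeff) hMs
      obtain ⟨M₀, _, rfl⟩ := Finset.mem_image.1 this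
      exact Tword_norm M₀
    · have := (TwoSidedIdeal.span (Srel K n)).sub_mem (sub_normF_mem F) hmem
      convert this using 1
      abel
end

section
/- Let J be a graded two-sided ideal of K⟨X₁,…,Xₙ,T⟩ containing {XᵢT − TXᵢ : 1 ≤ i ≤ n}. If G is a homogeneous Gröbner basis of J with respect to the graded lex ordering with T smallest, then G∼ = { G(X,T↦1) : G ∈ G } is a Gröbner basis of the dehomogenized ideal J∼ = ψ(J) in K⟨X₁,…,Xₙ⟩, where ψ is the algebra map with ψ(Xᵢ) = Xᵢ, ψ(T) = 1. -/
namespace S18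
open List

section lex
variable {α β : Type*} {r : α → α → Prop} {r' : β → β → Prop}

lemma lex_trans (htr : ∀ a b c, r a b → r b c → r a c) :
    ∀ {l1 l2 l3 : List α}, List.Lex r l1 l2 → List.Lex r l2 l3 → List.Lex r l1 l3 := by
  intro l1 l2 l3 h12 h23
  induction h12 generalizing l3 with
  | nil =>
    cases h23 with
    | cons h => exact List.Lex.nil
    | rel h => exact List.Lex.nil
  | @cons a l1' l2' h ih =>
    cases h23 with
    | cons h' => exact List.Lex.cons (ih h')
    | rel h' => exact List.Lex.rel h'
  | @rel a l1' b l2' h =>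
    cases h23 with
    | cons h' => exact List.Lex.rel h
    | rel h' => exact List.Lex.rel (htr _ _ _ h h')

lemma lex_irrefl (hir : ∀ a, ¬ r a a) : ∀ l : List α, ¬ List.Lex r l l := by
  intro l hl
  induction l with
  | nil => cases hl
  | cons a l ih =>
    cases hl with
    | cons h => exact ih h
    | rel h => exact hir a h

lemma lex_asymm (hir : ∀ a, ¬ r a a) (has : ∀ a b, r a b → ¬ r b a) :
    ∀ {l1 l2 : List α}, List.Lex r l1 l2 → ¬ List.Lex r l2 l1 := by
  intro l1 l2 h12 h21
  induction h12 with
  | nil => cases h21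
  | cons h ih => cases h21 with
    | cons h' => exact ih h'
    | rel h' => exact hir _ h'
  | rel h => cases h21 with
    | cons h' => exact hir _ h
    | rel h' => exact has _ _ h h'

lemma lex_trichot (htri : ∀ a b, r a b ∨ a = b ∨ r b a) :
    ∀ l1 l2 : List α, List.Lex r l1 l2 ∨ l1 = l2 ∨ List.Lex r l2 l1 := by
  intro l1
  induction l1 with
  | nil => intro l2; cases l2 with
    | nil => exact Or.inr (Or.inl rfl)
    | cons b l2 => exact Or.inl List.Lex.nil
  | cons a l1 ih =>
    intro l2; cases l2 with
    | nil => exact Or.inr (Or.inr List.Lex.nil)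
    | cons b l2 =>
      rcases htri a b with h | rfl | h
      · exact Or.inl (List.Lex.rel h)
      · rcases ih l2 with h | rfl | h
        · exact Or.inl (List.Lex.cons h)
        · exact Or.inr (Or.inl rfl)
        · exact Or.inr (Or.inr (List.Lex.cons h))
      · exact Or.inr (Or.inr (List.Lex.rel h))

lemma lex_append_left (t : List α) {l1 l2 : List α} (h : List.Lex r l1 l2) :
    List.Lex r (t ++ l1) (t ++ l2) := by
  induction t with
  | nil => exact h
  | cons a t ih => exact List.Lex.cons ih

lemma lex_map (φ : α → β) (hφ : ∀ a b, r a b → r' (φ a) (φ b)) :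
    ∀ {l1 l2 : List α}, List.Lex r l1 l2 → List.Lex r' (l1.map φ) (l2.map φ) := by
  intro l1 l2 h
  induction h with
  | nil => exact List.Lex.nil
  | cons h ih => exact List.Lex.cons ih
  | rel h => exact List.Lex.rel (hφ _ _ h)

end lex

lemma exists_max {α : Type*} (lt : α → α → Prop)
    (htr : ∀ a b c, lt a b → lt b c → lt a c)
    (htri : ∀ a b, lt a b ∨ a = b ∨ lt b a)
    (s : Finset α) (hs : s.Nonempty) : ∃ m ∈ s, ∀ x ∈ s, x ≠ m → lt x m := by
  induction hs using Finset.Nonempty.cons_induction with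
  | singleton a => exact ⟨a, Finset.mem_singleton_self a, by
      intro x hx hne; exact absurd (Finset.mem_singleton.1 hx) hne⟩
  | cons a s ha hs ih =>
    obtain ⟨m, hm, hmax⟩ := ih
    rcases htri a m with h | rfl | h
    · refine ⟨m, Finset.mem_cons_of_mem hm, ?_⟩
      intro x hx hne
      rcases Finset.mem_cons.1 hx with rfl | hx
      · exact h
      · exact hmax x hx hne
    · exact absurd hm ha
    · refine ⟨a, Finset.mem_cons_self a s, ?_⟩
      intro x hx hne
      rcases Finset.mem_cons.1 hx with rfl | hx
      · exact absurd rfl hne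
      · by_cases hxm : x = m
        · exact hxm ▸ h
        · exact htr _ _ _ (hmax x hx hxm) h


open List

variable {n : ℕ}

def dll (l : List (Option (Fin n))) : List (Fin n) := l.filterMap id

@[simp] lemma dll_nil : dll ([] : List (Option (Fin n))) = [] := rfl
@[simp] lemma dll_cons_none (l : List (Option (Fin n))) : dll (none :: l) = dll l := rfl
@[simp] lemma dll_cons_some (i : Fin n) (l) : dll (some i :: l) = i :: dll l := rfl
lemma dll_append (l1 l2 : List (Option (Fin n))) : dll (l1 ++ l2) = dll l1 ++ dll l2 :=
  List.filterMap_append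
@[simp] lemma dll_replicate (b : ℕ) : dll (replicate b (none : Option (Fin n))) = [] := by
  induction b with
  | zero => rfl
  | succ b ih => rw [replicate_succ]; simpa using ih
@[simp] lemma dll_map_some (u : List (Fin n)) : dll (u.map some) = u := by
  induction u with
  | nil => rfl
  | cons a u ih => simpa using ih
lemma dll_length_le (l : List (Option (Fin n))) : (dll l).length ≤ l.length :=
  List.length_filterMap_le _ _

lemma ltLetter_trans : ∀ a b c : Option (Fin n), ltLetter a b → ltLetter b c → ltLetter a c := by
  rintro (_|i) (_|j) (_|k) h1 h2 <;> simp_all [ltLetter] <;> omega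

lemma ltLetter_irrefl : ∀ a : Option (Fin n), ¬ ltLetter a a := by
  rintro (_|i) h <;> simp_all [ltLetter]

lemma ltLetter_asymm : ∀ a b : Option (Fin n), ltLetter a b → ¬ ltLetter b a := by
  rintro (_|i) (_|j) h1 h2 <;> simp_all [ltLetter] <;> omega

lemma key1 : ∀ (u : List (Fin n)) (M : List (Option (Fin n))),
    M.length = u.length → List.Lex ltLetter M (u.map some) →
    (dll M).length < u.length ∨
      ((dll M).length = u.length ∧ List.Lex (· < ·) (dll M) u) := by
  intro u
  induction u with
  | nil =>
    intro M hlen hlex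
    simp only [length_nil, List.length_eq_zero_iff] at hlen; subst hlen
    cases hlex
  | cons j u ih =>
    intro M hlen hlex
    cases M with
    | nil => simp at hlen
    | cons x M =>
      simp only [length_cons, Nat.add_right_cancel_iff] at hlen
      cases hlex with
      | cons h =>
        rcases ih M hlen h with h' | ⟨h1, h2⟩
        · left; simp only [dll_cons_some, length_cons]; omega
        · right
          constructor
          · simp [h1]
          · exact List.Lex.cons h2
      | rel h =>
        cases x with
        | none =>
          left
          have := dll_length_le M
          simp only [dll_cons_none, length_cons]
          omega
        | some i =>
          have hij : i < j := h
          rcases Nat.lt_or_ge (dll M).length u.length with h' | h'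
          · left; simp only [dll_cons_some, length_cons]; omega
          · right
            have hle := dll_length_le M
            have hEq : (dll M).length = u.length := by omega
            exact ⟨by simp [hEq], List.Lex.rel hij⟩

lemma key2 : ∀ (b : ℕ) (u : List (Fin n)) (M : List (Option (Fin n))),
    M.length = b + u.length → List.Lex ltLetter M (replicate b none ++ u.map some) →
    (dll M).length < u.length ∨
      ((dll M).length = u.length ∧ List.Lex (· < ·) (dll M) u) := by
  intro b
  induction b with
  | zero => intro u M h1 h2; exact key1 u M (by simpa using h1) (by simpa using h2)
  | succ b ih =>
    intro u M hlen hlex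
    cases M with
    | nil => simp only [length_nil] at hlen; omega
    | cons x M =>
      rw [replicate_succ, cons_append] at hlex
      cases hlex with
      | cons h =>
        have hl : M.length = b + u.length := by
          simp only [length_cons] at hlen; omega
        simpa using ih u M hl h
      | rel h => exact absurd h (by cases x <;> simp [ltLetter])

lemma lex_rep_lt (c k : ℕ) (hk : 0 < k) (w lm : List (Fin n)) (hlm : lm ≠ []) :
    List.Lex ltLetter (replicate (c + k) none ++ w.map some)
      (replicate c none ++ lm.map some) := by
  induction c with
  | zero =>
    cases lm with
    | nil => exact absurd rfl hlm
    | cons j lm =>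
      cases k with
      | zero => omega
      | succ k =>
        simp only [Nat.zero_add, replicate_succ, replicate_zero, nil_append, cons_append]
        exact List.Lex.rel (by trivial)
  | succ c ih =>
    have h : c + 1 + k = (c + k) + 1 := by omega
    rw [h, replicate_succ, replicate_succ, cons_append, cons_append]
    exact List.Lex.cons ih

lemma all_some (N : List (Option (Fin n))) (h : ∀ x ∈ N, ∃ y, x = some y) :
    N = (dll N).map some := by
  induction N with
  | nil => rfl
  | cons x N ih =>
    obtain ⟨y, rfl⟩ := h x mem_cons_self
    simp only [dll_cons_some, map_cons, cons.injEq, true_and]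
    exact ih fun z hz => h z (mem_cons_of_mem _ hz)

lemma infix_cons {x : Option (Fin n)} {N L : List (Option (Fin n))}
    (h : N <:+: x :: L) : N <+: x :: L ∨ N <:+: L := by
  obtain ⟨l, r, hlr⟩ := h
  cases l with
  | nil => left; exact ⟨r, hlr⟩
  | cons a l =>
    right
    simp only [cons_append, cons.injEq] at hlr
    exact ⟨l, r, hlr.2⟩

lemma infix_struct : ∀ (a : ℕ) (s : List (Fin n)) (N : List (Option (Fin n))),
    N <:+: (replicate a none ++ s.map some) →
    ∃ (b : ℕ) (u : List (Fin n)), N = replicate b none ++ u.map some := by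
  intro a
  induction a with
  | zero =>
    intro s N hN
    simp only [replicate_zero, nil_append] at hN
    refine ⟨0, dll N, ?_⟩
    simp only [replicate_zero, nil_append]
    refine all_some N fun x hx => ?_
    have := hN.subset hx
    simp only [mem_map] at this
    obtain ⟨y, _, rfl⟩ := this
    exact ⟨y, rfl⟩
  | succ a ih =>
    intro s N hN
    rw [replicate_succ, cons_append] at hN
    rcases infix_cons hN with hp | hi
    · obtain ⟨r, hr⟩ := hp
      cases N with
      | nil => exact ⟨0, [], rfl⟩
      | cons x N =>
        simp only [cons_append, cons.injEq] at hr
        obtain ⟨rfl, hr⟩ := hr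
        obtain ⟨b, u, rfl⟩ := ih s N ⟨[], r, by simpa using hr⟩
        exact ⟨b + 1, u, by rw [replicate_succ]; rfl⟩
    · exact ih s N hi

-- order wrappers
lemma ltWX_trans : ∀ a b c : WrdX n, ltWX a b → ltWX b c → ltWX a c := by
  intro a b c hab hbc
  rcases hab with h1 | ⟨h1, h1'⟩ <;> rcases hbc with h2 | ⟨h2, h2'⟩
  · exact Or.inl (lt_trans h1 h2)
  · exact Or.inl (h2 ▸ h1)
  · exact Or.inl (h1 ▸ h2)
  · exact Or.inr ⟨h1.trans h2, lex_trans (fun x y z (hxy : x < y) (hyz : y < z) => lt_trans hxy hyz) h1' h2'⟩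

lemma ltWX_trichot : ∀ a b : WrdX n, ltWX a b ∨ a = b ∨ ltWX b a := by
  intro a b
  rcases Nat.lt_trichotomy (xlen a) (xlen b) with h | h | h
  · exact Or.inl (Or.inl h)
  · rcases lex_trichot (fun x y : Fin n => lt_trichotomy x y)
      (FreeMonoid.toList a) (FreeMonoid.toList b) with h' | h' | h'
    · exact Or.inl (Or.inr ⟨h, h'⟩)
    · exact Or.inr (Or.inl (FreeMonoid.toList.injective h'))
    · exact Or.inr (Or.inr (Or.inr ⟨h.symm, h'⟩))
  · exact Or.inr (Or.inr (Or.inl h))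

lemma ltWX_irrefl : ∀ a : WrdX n, ¬ ltWX a a := by
  rintro a (h | ⟨-, h⟩)
  · omega
  · exact lex_irrefl (fun x : Fin n => lt_irrefl x) _ h

lemma ltW_asymm : ∀ a b : Wrd n, ltW a b → ¬ ltW b a := by
  rintro a b (h1 | ⟨h1, h1'⟩) (h2 | ⟨h2, h2'⟩)
  · omega
  · omega
  · omega
  · exact lex_asymm ltLetter_irrefl ltLetter_asymm h1' h2'

lemma LM_unique {K M : Type*} [Field K] [Monoid M] {lt : M → M → Prop}
    (hasym : ∀ a b, lt a b → ¬ lt b a) {f : MonoidAlgebra K M} {m m' : M}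
    (h : IsLMnc lt f m) (h' : IsLMnc lt f m') : m = m' := by
  by_contra hne
  exact hasym _ _ (h'.2 m h.1 hne) (h.2 m' h'.1 (fun hh => hne hh.symm))

-- free monoid plumbing
def dlh : Wrd n →* WrdX n := FreeMonoid.lift fun o : Option (Fin n) => o.elim 1 FreeMonoid.of

lemma toList_dlh_ofList (l : List (Option (Fin n))) :
    FreeMonoid.toList (dlh (FreeMonoid.ofList l)) = dll l := by
  induction l with
  | nil => rfl
  | cons x l ih =>
    rw [FreeMonoid.ofList_cons, map_mul, FreeMonoid.toList_mul]
    cases x with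
    | none =>
      have h1 : dlh (FreeMonoid.of (none : Option (Fin n))) = 1 := rfl
      rw [h1, FreeMonoid.toList_one, List.nil_append, ih, dll_cons_none]
    | some i =>
      have h1 : dlh (FreeMonoid.of (some i : Option (Fin n))) = FreeMonoid.of i := rfl
      rw [h1, ih]
      rfl

lemma toList_dlh (M : Wrd n) :
    FreeMonoid.toList (dlh M) = dll (FreeMonoid.toList M) := by
  simpa using toList_dlh_ofList (FreeMonoid.toList M)

lemma of_none_pow (r : ℕ) :
    (FreeMonoid.of (none : Option (Fin n))) ^ r
      = FreeMonoid.ofList (List.replicate r none) := by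
  induction r with
  | zero => rfl
  | succ r ih => rw [pow_succ', ih, List.replicate_succ, FreeMonoid.ofList_cons]

variable {K : Type*} [Field K]

lemma dehF_eq (F : FA K n) : dehF F = MonoidAlgebra.ofCoeff (Finsupp.mapDomain (⇑(dlh (n := n))) F.coeff) := rfl

lemma single_one_mul_eq_mapDomain (a : Wrd n) (F : FA K n) :
    MonoidAlgebra.single a (1 : K) * F = MonoidAlgebra.ofCoeff (Finsupp.mapDomain (fun x => a * x) F.coeff) := by
  induction F using MonoidAlgebra.induction with
  | zero => simp
  | single_add b c f hb hc ih =>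
    rw [mul_add, MonoidAlgebra.coeff_add, Finsupp.mapDomain_add, MonoidAlgebra.ofCoeff_add, ih,
      MonoidAlgebra.coeff_single, Finsupp.mapDomain_single]
    congr 1
    rw [MonoidAlgebra.single_mul_single, one_mul]
    rfl

lemma smul_mem'' (J : TwoSidedIdeal (FA K n)) (c : K) {x : FA K n} (hx : x ∈ J) :
    c • x ∈ J := by
  rw [Algebra.smul_def]
  exact J.mul_mem_left _ _ hx

def tnl (l : List (Option (Fin n))) : List (Option (Fin n)) :=
  List.replicate (l.length - (dll l).length) none ++ (dll l).map some

def tnw (M : Wrd n) : Wrd n := FreeMonoid.ofList (tnl (FreeMonoid.toList M))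

lemma tnl_def (l : List (Option (Fin n))) : tnl l
    = List.replicate (l.length - (dll l).length) none ++ (dll l).map some := rfl

lemma tnl_nil : tnl ([] : List (Option (Fin n))) = [] := rfl

lemma tnl_cons_none (l : List (Option (Fin n))) : tnl (none :: l) = none :: tnl l := by
  unfold tnl
  rw [dll_cons_none, List.length_cons, Nat.succ_sub (dll_length_le l), List.replicate_succ,
    List.cons_append]

lemma tnl_cons_some (i : Fin n) (l : List (Option (Fin n))) :
    tnl (some i :: l) = List.replicate (l.length - (dll l).length) none
      ++ some i :: (dll l).map some := by
  unfold tnl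
  rw [dll_cons_some, List.length_cons]
  simp only [List.length_cons, Nat.succ_sub_succ, List.map_cons]

lemma comm_mem (J : TwoSidedIdeal (FA K n)) (hS : Srel K n ⊆ (J : Set (FA K n)))
    (i : Fin n) (r : ℕ) : XX K i * TT K n ^ r - TT K n ^ r * XX K i ∈ J := by
  induction r with
  | zero => simpa using J.zero_mem
  | succ r ih =>
    have key : XX K i * TT K n ^ (r + 1) - TT K n ^ (r + 1) * XX K i
        = (XX K i * TT K n - TT K n * XX K i) * TT K n ^ r
          + TT K n * (XX K i * TT K n ^ r - TT K n ^ r * XX K i) := by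
      rw [pow_succ']
      noncomm_ring
    rw [key]
    exact J.add_mem (J.mul_mem_right _ _ (hS ⟨i, rfl⟩)) (J.mul_mem_left _ _ ih)

lemma single_sub_tnl_mem (J : TwoSidedIdeal (FA K n)) (hS : Srel K n ⊆ (J : Set (FA K n))) :
    ∀ l : List (Option (Fin n)),
      (MonoidAlgebra.single (FreeMonoid.ofList l) (1 : K)
        - MonoidAlgebra.single (FreeMonoid.ofList (tnl l)) 1) ∈ J := by
  intro l
  induction l with
  | nil => rw [tnl_nil]; simpa using J.zero_mem
  | cons x l ih =>
    have h1 : MonoidAlgebra.single (FreeMonoid.ofList (x :: l)) (1 : K)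
        - MonoidAlgebra.single (FreeMonoid.of x * FreeMonoid.ofList (tnl l)) 1 ∈ J := by
      have := J.mul_mem_left (MonoidAlgebra.single (FreeMonoid.of x) (1 : K)) _ ih
      rw [mul_sub, MonoidAlgebra.single_mul_single, MonoidAlgebra.single_mul_single,
        one_mul, ← FreeMonoid.ofList_cons] at this
      exact this
    have h2 : MonoidAlgebra.single (FreeMonoid.of x * FreeMonoid.ofList (tnl l)) (1 : K)
        - MonoidAlgebra.single (FreeMonoid.ofList (tnl (x :: l))) 1 ∈ J := by
      cases x with
      | none =>
        rw [tnl_cons_none, FreeMonoid.ofList_cons]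
        simpa using J.zero_mem
      | some i =>
        set r := l.length - (dll l).length with hr
        have hcomm := J.mul_mem_right _ (MonoidAlgebra.single
          (FreeMonoid.ofList ((dll l).map some)) (1 : K)) (comm_mem J hS i r)
        rw [sub_mul] at hcomm
        have e1 : XX K i * TT K n ^ r
            * MonoidAlgebra.single (FreeMonoid.ofList ((dll l).map some)) (1 : K)
            = MonoidAlgebra.single (FreeMonoid.of (some i) * FreeMonoid.ofList (tnl l)) 1 := by
          rw [XX, TT, MonoidAlgebra.single_pow, one_pow, MonoidAlgebra.single_mul_single,
            MonoidAlgebra.single_mul_single, one_mul, one_mul, of_none_pow]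
          refine congrArg (fun w => MonoidAlgebra.single w (1 : K)) ?_
          apply FreeMonoid.toList.injective
          simp [tnl_def, ← hr, FreeMonoid.toList_mul, FreeMonoid.toList_ofList,
            FreeMonoid.toList_of, List.append_assoc]
        have e2 : TT K n ^ r * XX K i
            * MonoidAlgebra.single (FreeMonoid.ofList ((dll l).map some)) (1 : K)
            = MonoidAlgebra.single (FreeMonoid.ofList (tnl (some i :: l))) 1 := by
          rw [XX, TT, MonoidAlgebra.single_pow, one_pow, MonoidAlgebra.single_mul_single,
            MonoidAlgebra.single_mul_single, one_mul, one_mul, of_none_pow]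
          refine congrArg (fun w => MonoidAlgebra.single w (1 : K)) ?_
          apply FreeMonoid.toList.injective
          simp [tnl_cons_some, ← hr, FreeMonoid.toList_mul, FreeMonoid.toList_ofList,
            FreeMonoid.toList_of, List.append_assoc]
        rw [e1, e2] at hcomm
        exact hcomm
    simpa using J.add_mem h1 h2

noncomputable def tnF (F : FA K n) : FA K n := MonoidAlgebra.ofCoeff (Finsupp.mapDomain tnw F.coeff)

lemma sub_tn_mem (J : TwoSidedIdeal (FA K n)) (hS : Srel K n ⊆ (J : Set (FA K n)))
    (F : FA K n) : F - tnF F ∈ J := by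
  have h1 : F - tnF F
      = ∑ M ∈ F.coeff.support, (MonoidAlgebra.single M (F.coeff M)
          - MonoidAlgebra.single (tnw M) (F.coeff M)) := by
    rw [Finset.sum_sub_distrib]
    exact congrArg₂ (fun a b => a - b) (MonoidAlgebra.sum_coeff_single F).symm
      (by rw [tnF, Finsupp.mapDomain, MonoidAlgebra.ofCoeff_finsuppSum]; rfl)
  rw [h1]
  refine J.finsetSum_mem _ _ fun M hM => ?_
  have h2 := smul_mem'' J (F.coeff M) (single_sub_tnl_mem J hS (FreeMonoid.toList M))
  rw [smul_sub, MonoidAlgebra.smul_single', MonoidAlgebra.smul_single', mul_one,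
    FreeMonoid.ofList_toList] at h2
  exact h2

lemma sum_homog (F : FA K n) (P : ℕ) (hP : ∀ M ∈ F.coeff.support, wlen M ≤ P) :
    ∑ p ∈ Finset.range (P + 1), homogComponentW p F = F := by
  ext M
  rw [MonoidAlgebra.coeff_sum, Finset.sum_apply']
  simp only [homogComponentW, MonoidAlgebra.coeff_ofCoeff, Finsupp.filter_apply]
  by_cases h : M ∈ F.coeff.support
  · rw [Finset.sum_ite_eq]
    exact if_pos (Finset.mem_range.2 (Nat.lt_succ_of_le (hP M h)))
  · have h0 : F.coeff M = 0 := Finsupp.notMem_support_iff.mp h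
    simp [h0]

def gfl (P : ℕ) (u : List (Fin n)) : Wrd n :=
  FreeMonoid.ofList (List.replicate (P - u.length) none ++ u.map some)

lemma toList_gfl (P : ℕ) (u : List (Fin n)) :
    FreeMonoid.toList (gfl P u) = List.replicate (P - u.length) none ++ u.map some := rfl

lemma gfl_inj (P : ℕ) :
    Function.Injective (fun w : WrdX n => gfl P (FreeMonoid.toList w)) := by
  intro w v h
  have h2 := congrArg (fun M : Wrd n => dll (FreeMonoid.toList M)) h
  simp only [toList_gfl, dll_append, dll_replicate, dll_map_some, List.nil_append] at h2
  exact FreeMonoid.toList.injective h2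

lemma wlen_gfl (P : ℕ) (u : List (Fin n)) (h : u.length ≤ P) : wlen (gfl P u) = P := by
  simp only [wlen, toList_gfl, List.length_append, List.length_replicate, List.length_map]
  omega

noncomputable def gfF (P : ℕ) (f : FAX K n) : FA K n :=
  MonoidAlgebra.ofCoeff (Finsupp.mapDomain (fun w => gfl P (FreeMonoid.toList w)) f.coeff)

lemma dlh_gfl (P : ℕ) (u : List (Fin n)) : dlh (gfl P u) = FreeMonoid.ofList u := by
  apply FreeMonoid.toList.injective
  rw [toList_dlh, toList_gfl, dll_append, dll_replicate, dll_map_some, List.nil_append]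
  rfl

lemma H_mem (J : TwoSidedIdeal (FA K n)) (hS : Srel K n ⊆ (J : Set (FA K n)))
    (hgr : ∀ F ∈ J, ∀ p : ℕ, homogComponentW p F ∈ J)
    (F : FA K n) (hF : F ∈ J) :
    gfF (F.coeff.support.sup wlen) (dehF F) ∈ J := by
  set P := F.coeff.support.sup wlen with hP
  have hgfF : gfF P (dehF F)
      = MonoidAlgebra.ofCoeff
          (Finsupp.mapDomain (fun M : Wrd n => gfl P (dll (FreeMonoid.toList M))) F.coeff) := by
    rw [gfF, dehF_eq, MonoidAlgebra.coeff_ofCoeff, ← Finsupp.mapDomain_comp]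
    congr 2
    funext M
    simp only [Function.comp_apply, toList_dlh]
  have hsum := sum_homog F P (fun M hM => Finset.le_sup (f := wlen) hM)
  have hsplit : MonoidAlgebra.ofCoeff
        (Finsupp.mapDomain (fun M : Wrd n => gfl P (dll (FreeMonoid.toList M))) F.coeff)
      = ∑ p ∈ Finset.range (P + 1), MonoidAlgebra.ofCoeff
          (Finsupp.mapDomain (fun M : Wrd n => gfl P (dll (FreeMonoid.toList M)))
            (homogComponentW p F).coeff) := by
    conv_lhs => rw [← hsum]
    rw [MonoidAlgebra.coeff_sum, Finsupp.mapDomain_finset_sum, MonoidAlgebra.ofCoeff_sum]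
  rw [hgfF, hsplit]
  refine J.finsetSum_mem _ _ fun p hp => ?_
  have hple : p ≤ P := Nat.lt_succ_iff.mp (Finset.mem_range.mp hp)
  -- the homogeneous component is in J, hence so is its T-normal form
  have hFp : homogComponentW p F ∈ J := hgr F hF p
  have hNp : tnF (homogComponentW p F) ∈ J := by
    have h1 := J.sub_mem hFp (sub_tn_mem J hS (homogComponentW p F))
    simpa using h1
  have hTNp := J.mul_mem_left
    (MonoidAlgebra.single (FreeMonoid.ofList (List.replicate (P - p) none)) (1 : K)) _ hNp
  have heq : MonoidAlgebra.single (FreeMonoid.ofList (List.replicate (P - p) none)) (1 : K)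
      * tnF (homogComponentW p F)
      = MonoidAlgebra.ofCoeff (Finsupp.mapDomain (fun M : Wrd n => gfl P (dll (FreeMonoid.toList M)))
          (homogComponentW p F).coeff) := by
    rw [tnF, single_one_mul_eq_mapDomain, MonoidAlgebra.coeff_ofCoeff, ← Finsupp.mapDomain_comp]
    congr 1
    apply Finsupp.mapDomain_congr
    intro M hM
    have hwM : wlen M = p := by
      have : M ∈ F.coeff.support.filter (fun M => wlen M = p) := by
        rw [← Finsupp.support_filter]
        exact hM
      exact (Finset.mem_filter.mp this).2
    have hk : (dll (FreeMonoid.toList M)).length ≤ p := by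
      have := dll_length_le (FreeMonoid.toList M)
      rw [← hwM]; exact this
    simp only [Function.comp_apply, tnw]
    apply FreeMonoid.toList.injective
    rw [FreeMonoid.toList_mul, FreeMonoid.toList_ofList, FreeMonoid.toList_ofList,
      tnl_def, toList_gfl]
    rw [← List.append_assoc, ← List.replicate_add]
    have hw' : (FreeMonoid.toList M).length = p := hwM
    have harith : P - p + ((FreeMonoid.toList M).length - (dll (FreeMonoid.toList M)).length)
        = P - (dll (FreeMonoid.toList M)).length := by omega
    rw [harith]
  rw [heq] at hTNp
  exact hTNp

lemma gf_mono (P : ℕ) {w v : WrdX n} (hw : xlen w ≤ P) (hv : xlen v ≤ P)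
    (h : ltWX w v) : ltW (gfl P (FreeMonoid.toList w)) (gfl P (FreeMonoid.toList v)) := by
  right
  refine ⟨by rw [wlen_gfl _ _ hw, wlen_gfl _ _ hv], ?_⟩
  rw [toList_gfl, toList_gfl]
  rcases h with h | ⟨h, hlex⟩
  · have h1 : P - (FreeMonoid.toList w).length
        = (P - (FreeMonoid.toList v).length) + ((FreeMonoid.toList v).length
            - (FreeMonoid.toList w).length) := by
      have hw' : xlen w = (FreeMonoid.toList w).length := rfl
      have hv' : xlen v = (FreeMonoid.toList v).length := rfl
      omega
    rw [h1]
    refine lex_rep_lt _ _ (by have hw' : xlen w = (FreeMonoid.toList w).length := rfl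
                              have hv' : xlen v = (FreeMonoid.toList v).length := rfl
                              omega) _ _ ?_
    intro hnil
    have : xlen v = 0 := by rw [xlen, hnil]; rfl
    omega
  · have h1 : P - (FreeMonoid.toList w).length = P - (FreeMonoid.toList v).length := by
      have hx : xlen w = xlen v := h
      have hw' : xlen w = (FreeMonoid.toList w).length := rfl
      have hv' : xlen v = (FreeMonoid.toList v).length := rfl
      omega
    rw [h1]
    refine lex_append_left _ ?_
    exact lex_map some (fun a b hab => by simpa [ltLetter] using hab) hlex

end S18

open S18

theorem stmt18 {K : Type*} [Field K] {n : ℕ}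
    (J : TwoSidedIdeal (FA K n)) (hS : Srel K n ⊆ (J : Set (FA K n)))
    (hgr : ∀ F ∈ J, ∀ p : ℕ, homogComponentW p F ∈ J)
    (G : Set (FA K n)) (hhom : ∀ g ∈ G, ∃ p : ℕ, IsHomogW g p)
    (hGB : IsGBnc ltW G (J : Set (FA K n))) :
    IsGBnc ltWX (dehF '' G) (dehF '' (J : Set (FA K n))) := by
  classical
  constructor
  · exact Set.image_mono hGB.1
  · rintro f ⟨F, hFJ, rfl⟩ hf0
    set P := F.coeff.support.sup wlen with hPdef
    have hsupp_f : ∀ w ∈ (dehF F).coeff.support, xlen w ≤ P := by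
      intro w hw
      have hsub2 : (dehF F).coeff.support ⊆ F.coeff.support.image (⇑(dlh (n := n))) := by
        rw [dehF_eq]; exact Finsupp.mapDomain_support
      obtain ⟨M, hM, rfl⟩ := Finset.mem_image.mp (hsub2 hw)
      have h1 : xlen (dlh M) = (dll (FreeMonoid.toList M)).length := by rw [xlen, toList_dlh]
      have h2 := dll_length_le (FreeMonoid.toList M)
      have h3 : wlen M ≤ P := Finset.le_sup hM
      rw [h1]
      exact le_trans h2 h3
    -- leading monomial of f
    have hne : (dehF F).coeff.support.Nonempty :=
        Finsupp.support_nonempty_iff.mpr (fun h => hf0 (MonoidAlgebra.coeff_eq_zero.mp h))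
    obtain ⟨lm, hlm_mem, hlm_max⟩ :=
      exists_max ltWX (fun a b c => ltWX_trans a b c) (fun a b => ltWX_trichot a b) _ hne
    have hLMf : IsLMnc ltWX (dehF F) lm := ⟨hlm_mem, hlm_max⟩
    -- the homogenized element H
    have hHmem := H_mem J hS hgr F hFJ
    rw [← hPdef] at hHmem
    have hH0 : gfF P (dehF F) ≠ 0 := by
      intro h0
      exact hf0 (MonoidAlgebra.coeff_eq_zero.mp (Finsupp.mapDomain_injective (gfl_inj P)
        ((congrArg MonoidAlgebra.coeff h0).trans Finsupp.mapDomain_zero.symm)))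
    have hsuppH : (gfF P (dehF F)).coeff.support
        = (dehF F).coeff.support.image (fun w : WrdX n => gfl P (FreeMonoid.toList w)) :=
      Finsupp.mapDomain_support_of_injective (gfl_inj P) _
    have hLMH : IsLMnc ltW (gfF P (dehF F)) (gfl P (FreeMonoid.toList lm)) := by
      constructor
      · rw [hsuppH]; exact Finset.mem_image_of_mem _ hlm_mem
      · intro M' hM' hne'
        rw [hsuppH] at hM'
        obtain ⟨w, hw, rfl⟩ := Finset.mem_image.mp hM'
        have hwne : w ≠ lm := fun hh => hne' (by rw [hh])
        exact gf_mono P (hsupp_f w hw) (hsupp_f lm hlm_mem) (hlm_max w hw hwne)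
    -- apply the Groebner basis property to H
    obtain ⟨g0, hg0G, mf', mg, hLMH', hLMg0, hsub⟩ := hGB.2 _ hHmem hH0
    have hmf' : mf' = gfl P (FreeMonoid.toList lm) :=
      LM_unique (fun a b => ltW_asymm a b) hLMH' hLMH
    subst hmf'
    obtain ⟨L, R, hLR⟩ := hsub
    -- structure of mg
    have hinfix : FreeMonoid.toList mg <:+:
        (List.replicate (P - (FreeMonoid.toList lm).length) none
          ++ (FreeMonoid.toList lm).map some) := by
      refine ⟨FreeMonoid.toList L, FreeMonoid.toList R, ?_⟩
      rw [← FreeMonoid.toList_mul, ← FreeMonoid.toList_mul, ← hLR, toList_gfl]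
    obtain ⟨b, u, hmg⟩ := infix_struct _ (FreeMonoid.toList lm) _ hinfix
    set uw : WrdX n := dlh mg with huw
    have huw_list : FreeMonoid.toList uw = u := by
      rw [huw, toList_dlh, hmg, dll_append, dll_replicate, dll_map_some, List.nil_append]
    -- subword uw lm
    have hsubw : subword uw lm := by
      refine ⟨dlh L, dlh R, ?_⟩
      have h1 := congrArg (⇑(dlh (n := n))) hLR
      rw [map_mul, map_mul] at h1
      have h2 : dlh (gfl P (FreeMonoid.toList lm)) = lm := by
        rw [dlh_gfl, FreeMonoid.ofList_toList]
      rw [h2] at h1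
      exact h1
    -- homogeneity of g0
    obtain ⟨p', hp'⟩ := hhom g0 hg0G
    have hmg_mem : mg ∈ g0.coeff.support := hLMg0.1
    have hmg_len : wlen mg = p' := hp' mg hmg_mem
    have hmglen : wlen mg = b + u.length := by
      rw [wlen, hmg]; simp
    -- key ordering fact
    have hkey : ∀ M ∈ g0.coeff.support, M ≠ mg → ltWX (dlh M) uw := by
      intro M hM hne2
      have hlt := hLMg0.2 M hM hne2
      have hlenM : wlen M = wlen mg := by rw [hp' M hM, hmg_len]
      have hx1 : xlen (dlh M) = (dll (FreeMonoid.toList M)).length := by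
        rw [xlen, toList_dlh]
      have hx2 : xlen uw = u.length := by rw [xlen, huw_list]
      rcases hlt with h | ⟨-, hlex⟩
      · omega
      · have hlen2 : (FreeMonoid.toList M).length = b + u.length :=
          hlenM.trans hmglen
        rw [hmg] at hlex
        rcases key2 b u _ hlen2 hlex with h | ⟨h1, h2⟩
        · exact Or.inl (by rw [hx1, hx2]; exact h)
        · refine Or.inr ⟨by rw [hx1, hx2]; exact h1, ?_⟩
          rw [huw_list]
          have hM3 : FreeMonoid.toList (dlh M) = dll (FreeMonoid.toList M) := toList_dlh M
          rw [hM3]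
          exact h2
    -- leading monomial of dehF g0 is uw
    have hcoeff : (dehF g0).coeff uw = g0.coeff mg := by
      rw [dehF_eq, MonoidAlgebra.coeff_ofCoeff, Finsupp.mapDomain, Finsupp.sum_apply, Finsupp.sum]
      rw [Finset.sum_eq_single mg
        (fun M hM hne2 => Finsupp.single_eq_of_ne
          (fun heq => absurd (hkey M hM hne2) (by rw [← heq]; exact ltWX_irrefl uw)))
        (fun h => absurd hmg_mem h)]
      exact Finsupp.single_eq_same
    have hLMdeh : IsLMnc ltWX (dehF g0) uw := by
      constructor
      · rw [Finsupp.mem_support_iff, hcoeff]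
        exact Finsupp.mem_support_iff.mp hmg_mem
      · intro w' hw' hne'
        have hsub3 : (dehF g0).coeff.support ⊆ g0.coeff.support.image (⇑(dlh (n := n))) := by
          rw [dehF_eq]; exact Finsupp.mapDomain_support
        obtain ⟨M, hM, rfl⟩ := Finset.mem_image.mp (hsub3 hw')
        exact hkey M hM (fun hh => hne' (by rw [hh]))
    exact ⟨dehF g0, Set.mem_image_of_mem _ hg0G, lm, uw, hLMf, hLMdeh, hsubw⟩
end
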